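/- arXiv:2501.08525 — 5 statements merged into one kernel-verified Lean document; each statement's English description precedes it below -/
import Mathlib

section
/- Let $n\geq 2$ and let $\Omega = \{x \in \mathbb{R}^n : x_1 > \sum_{k=2}^n x_k^2/2\}$. For $f(x) = -\tfrac{1}{4}\ln(x_1 - \sum_{k=2}^n x_k^2/2)$, the determinant of the Hessian matrix of $f$ equals $\frac{1}{4^n g(x)^{n+1}}$, where $g(x) = x_1 - \sum_{k=2}^n x_k^2/2$. -/
noncomputable section

/-- `g(x) = x₁ - ∑_{k=2}^n x_k²/2` (index `0` plays the role of `1`). -/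
def gfun (n : ℕ) [NeZero n] (x : Fin n → ℝ) : ℝ :=
  x 0 - ∑ k ∈ Finset.univ \ {0}, (x k) ^ 2 / 2

/-- `f(x) = -(1/4) ln g(x)`. -/
def ffun (n : ℕ) [NeZero n] (x : Fin n → ℝ) : ℝ := -(1/4) * Real.log (gfun n x)

/-- Partial derivative in the `i`-th coordinate direction. -/
def pd (n : ℕ) (i : Fin n) (h : (Fin n → ℝ) → ℝ) : (Fin n → ℝ) → ℝ :=
  fun x => fderiv ℝ h x (Pi.single i 1)

/-- The Hessian matrix `(∂²h/∂xᵢ∂xⱼ)`. -/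
def Hess (n : ℕ) (h : (Fin n → ℝ) → ℝ) (x : Fin n → ℝ) : Matrix (Fin n) (Fin n) ℝ :=
  fun i j => pd n i (pd n j h) x

namespace DetHessAux

variable {n : ℕ} [NeZero n]

/-- gradient vector of `g`. -/
def afun (x : Fin n → ℝ) (j : Fin n) : ℝ := if j = 0 then 1 else -x j

/-- the derivative of `g` as a continuous linear map. -/
def Gd (n : ℕ) [NeZero n] (x : Fin n → ℝ) : (Fin n → ℝ) →L[ℝ] ℝ :=
  ContinuousLinearMap.proj (R := ℝ) (φ := fun _ : Fin n => ℝ) 0 -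
    ∑ k ∈ Finset.univ \ {0}, x k • ContinuousLinearMap.proj (R := ℝ) (φ := fun _ : Fin n => ℝ) k

lemma hasG (x : Fin n → ℝ) : HasFDerivAt (gfun n) (Gd n x) x := by
  have h2 : HasFDerivAt (fun y : Fin n → ℝ => ∑ k ∈ Finset.univ \ {0}, (y k) ^ 2 / 2)
      (∑ k ∈ Finset.univ \ {0}, x k • ContinuousLinearMap.proj (R := ℝ) (φ := fun _ : Fin n => ℝ) k) x := by
    apply HasFDerivAt.fun_sum
    intro k _
    have hk := (ContinuousLinearMap.proj (R := ℝ) (φ := fun _ : Fin n => ℝ) k).hasFDerivAt (x := x)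
    have h := (hk.fun_mul hk).const_mul (1/2 : ℝ)
    convert h using 1
    · ext y; simp
    · ext v; simp; ring
    · ext v; simp; ring
  exact ((ContinuousLinearMap.proj (R := ℝ) (φ := fun _ : Fin n => ℝ) 0).hasFDerivAt.sub h2 : _)

lemma Gd_apply (x : Fin n → ℝ) (j : Fin n) :
    Gd n x (Pi.single j 1) = afun x j := by
  have : ∀ k, (ContinuousLinearMap.proj (R := ℝ) (φ := fun _ : Fin n => ℝ) k) (Pi.single j 1) = if j = k then 1 else 0 := by
    intro k; simp [Pi.single_apply, eq_comm]
  simp only [Gd, ContinuousLinearMap.sub_apply, ContinuousLinearMap.sum_apply,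
    ContinuousLinearMap.smul_apply, this, smul_eq_mul, mul_ite, mul_one, mul_zero, afun]
  rcases eq_or_ne j 0 with h | h
  · simp [h]
  · rw [if_neg h, Finset.sum_ite_eq (Finset.univ \ {0}) j (fun k => x k)]
    simp [h]

lemma hasF (x : Fin n → ℝ) (hx : 0 < gfun n x) :
    HasFDerivAt (ffun n) ((-(1/4) * (gfun n x)⁻¹) • Gd n x) x := by
  have h := ((hasG x).log hx.ne').const_mul (-(1/4) : ℝ)
  have : (-(1/4) : ℝ) • ((gfun n x)⁻¹ • Gd n x) = (-(1/4) * (gfun n x)⁻¹) • Gd n x := by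
    rw [smul_smul]
  rw [← this]
  exact h

/-- first partial derivatives of `f` on `{g > 0}`. -/
lemma pd_f (j : Fin n) (x : Fin n → ℝ) (hx : 0 < gfun n x) :
    pd n j (ffun n) x = -(1/4) * (gfun n x)⁻¹ * afun x j := by
  rw [pd, (hasF x hx).fderiv, ContinuousLinearMap.smul_apply, Gd_apply, smul_eq_mul]

/-- second partial derivatives. -/
lemma pd_pd_f (i j : Fin n) (x : Fin n → ℝ) (hx : 0 < gfun n x) :
    pd n i (pd n j (ffun n)) x =
      (1/4) * (gfun n x)⁻¹ ^ 2 * (afun x i * afun x j)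
        + (1/4) * (gfun n x)⁻¹ * (if i = j ∧ j ≠ 0 then 1 else 0) := by
  have hopen : IsOpen {y : Fin n → ℝ | 0 < gfun n y} := by
    have hc : Continuous (gfun n) := by
      unfold gfun
      fun_prop
    exact isOpen_lt continuous_const hc
  -- the explicit formula for pd n j f near x
  have hev : pd n j (ffun n) =ᶠ[nhds x] fun y => -(1/4) * ((gfun n y)⁻¹ * afun y j) := by
    filter_upwards [hopen.mem_nhds hx] with y hy
    rw [pd_f j y hy, mul_assoc]
  rw [pd, hev.fderiv_eq]
  -- derivative of afun · j
  have ha : HasFDerivAt (fun y : Fin n → ℝ => afun y j)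
      (if j = 0 then 0 else -ContinuousLinearMap.proj (R := ℝ) (φ := fun _ : Fin n => ℝ) j) x := by
    rcases eq_or_ne j 0 with h | h
    · simp only [afun, h, if_pos rfl]
      simpa [h] using hasFDerivAt_const (1 : ℝ) x
    · simp only [afun, if_neg h]
      exact ((ContinuousLinearMap.proj (R := ℝ) (φ := fun _ : Fin n => ℝ) j).hasFDerivAt (x := x)).neg
  have hinv : HasFDerivAt (fun y => (gfun n y)⁻¹)
      ((-(gfun n x ^ 2)⁻¹) • Gd n x) x :=
    (hasDerivAt_inv hx.ne').comp_hasFDerivAt x (hasG x)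
  have hprod := ((hinv.fun_mul ha).const_mul (-(1/4) : ℝ))
  rw [hprod.fderiv]
  simp only [ContinuousLinearMap.smul_apply, ContinuousLinearMap.add_apply,
    ContinuousLinearMap.neg_apply, Gd_apply, smul_eq_mul]
  have hproj : (if j = 0 then (0 : (Fin n → ℝ) →L[ℝ] ℝ) else -ContinuousLinearMap.proj (R := ℝ) (φ := fun _ : Fin n => ℝ) j) (Pi.single i 1)
      = if j = 0 then 0 else -(if i = j then 1 else 0) := by
    rcases eq_or_ne j 0 with h | h
    · simp [h]
    · simp [h, Pi.single_apply, eq_comm]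
  rw [hproj]
  rcases eq_or_ne j 0 with h | h
  · simp only [h, if_pos rfl, afun]
    simp
    ring
  · rcases eq_or_ne i j with hij | hij
    · subst hij
      simp [afun, h]
      ring
    · simp [afun, h, hij]
      split_ifs <;> ring

end DetHessAux

/-- on `Ω = {g > 0}`, `det (Hess f) = 1/(4ⁿ g^{n+1})`. -/
theorem det_hessian_eq (n : ℕ) [NeZero n] (hn : 2 ≤ n) (x : Fin n → ℝ) (hx : 0 < gfun n x) :
    (Hess n (ffun n) x).det = 1 / (4 ^ n * (gfun n x) ^ (n + 1)) := by
  set g := gfun n x with hg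
  have hgne : g ≠ 0 := hx.ne'
  set a := DetHessAux.afun x with ha
  have ha0 : a 0 = 1 := by simp [ha, DetHessAux.afun]
  set M : Matrix (Fin n) (Fin n) ℝ :=
    Matrix.of fun i j => a i * a j + g * (if i = j ∧ j ≠ 0 then 1 else 0) with hM
  have hH : Hess n (ffun n) x = (1/(4*g^2)) • M := by
    ext i j
    rw [Hess, DetHessAux.pd_pd_f i j x hx]
    show _ = (1/(4*g^2)) * (a i * a j + g * (if i = j ∧ j ≠ 0 then 1 else 0))
    rw [← hg]
    split_ifs with hc <;> field_simp <;> ring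
  set N : Matrix (Fin n) (Fin n) ℝ :=
    Matrix.of fun i j => if j = 0 then a i else if i = j then g else 0 with hN
  set T : Matrix (Fin n) (Fin n) ℝ :=
    Matrix.of fun i j => if i = j then 1 else if i = 0 then a j else 0 with hT
  have hMNT : M = N * T := by
    ext i j
    rw [Matrix.mul_apply]
    rcases eq_or_ne j 0 with h | h
    · subst h
      rw [Finset.sum_eq_single 0]
      · simp [hM, hN, hT, ha0]
      · intro k _ hk
        simp [hN, hT, hk]
      · simp
    · have h0 : (0 : Fin n) ∈ (Finset.univ : Finset (Fin n)) := Finset.mem_univ _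
      rw [← Finset.add_sum_erase _ _ h0]
      have : ∑ k ∈ Finset.univ.erase 0, N i k * T k j
          = if i = j then g else 0 := by
        rw [Finset.sum_eq_single j]
        · simp [hN, hT, h]
        · intro k hk hkj
          have hk0 : k ≠ 0 := Finset.ne_of_mem_erase hk
          simp [hN, hT, hk0, hkj]
        · intro hj
          exact absurd (Finset.mem_erase.mpr ⟨h, Finset.mem_univ j⟩) hj
      rw [this]
      simp [hM, hN, hT, h, Ne.symm h]
      try split_ifs <;> ring
  have htri : ∀ (i j : Fin n), i < j → N i j = 0 := by
    intro i j hij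
    have hj0 : j ≠ 0 := by
      intro h; subst h; exact absurd hij (by simp)
    have hij' : i ≠ j := ne_of_lt hij
    simp [hN, hj0, hij']
  have hdetN : N.det = g ^ (n - 1) := by
    rw [Matrix.det_of_lowerTriangular N (fun i j hij => htri i j hij)]
    calc ∏ i, N i i = N 0 0 * ∏ i ∈ Finset.univ.erase 0, N i i :=
          (Finset.mul_prod_erase _ _ (Finset.mem_univ 0)).symm
      _ = 1 * ∏ _i ∈ Finset.univ.erase (0 : Fin n), g := by
          rw [show N 0 0 = 1 by simp [hN, ha0]]
          congr 1
          apply Finset.prod_congr rfl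
          intro i hi
          simp [hN, Finset.ne_of_mem_erase hi]
      _ = g ^ (n - 1) := by
          rw [one_mul, Finset.prod_const, Finset.card_erase_of_mem (Finset.mem_univ 0),
            Finset.card_univ, Fintype.card_fin]
  have hdetT : T.det = 1 := by
    rw [Matrix.det_of_upperTriangular (M := T)]
    · apply Finset.prod_eq_one
      intro i _
      simp [hT]
    · intro i j hij
      have hij' : i ≠ j := (ne_of_lt hij).symm
      have hi0 : i ≠ 0 := by
        intro h; subst h; exact absurd hij (by simp)
      simp [hT, hij', hi0]
  have hdetM : M.det = g ^ (n - 1) := by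
    rw [hMNT, Matrix.det_mul, hdetN, hdetT, mul_one]
  rw [hH, Matrix.det_smul, hdetM, Fintype.card_fin]
  rw [div_pow, one_pow, mul_pow, div_mul_eq_mul_div, one_mul, ← pow_mul]
  rw [div_eq_div_iff (by positivity) (by positivity)]
  rw [one_mul, ← mul_assoc, mul_comm (g ^ (n-1)) ((4:ℝ) ^ n), mul_assoc, ← pow_add]
  congr 2
  omega
end
end

section
/- Let $n\geq 2$, $g(x) = x_1 - \sum_{k=2}^n x_k^2/2$, and $f(x) = -\tfrac{1}{4}\ln g(x)$ on the domain where $g > 0$. The Hessian matrix of $f$ is positive definite at every point of the domain; that is, $f$ is strictly convex. -/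
noncomputable section

variable {n : ℕ} [NeZero n]

abbrev prj (n : ℕ) [NeZero n] (k : Fin n) : (Fin n → ℝ) →L[ℝ] ℝ :=
  ContinuousLinearMap.proj (R := ℝ) (φ := fun _ : Fin n => ℝ) k

def Lg (n : ℕ) [NeZero n] (x : Fin n → ℝ) : (Fin n → ℝ) →L[ℝ] ℝ :=
  prj n 0 - ∑ k ∈ Finset.univ \ {0}, x k • prj n k

lemma hasFDerivAt_gfun (x : Fin n → ℝ) : HasFDerivAt (gfun n) (Lg n x) x := by
  have h2 : ∀ k : Fin n, HasFDerivAt (fun y : Fin n → ℝ => (y k) ^ 2 / 2)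
      (x k • prj n k) x := by
    intro k
    have hk : HasFDerivAt (fun y : Fin n → ℝ => y k) (prj n k) x := hasFDerivAt_apply k x
    have h := ((hk.mul hk).const_mul ((2:ℝ)⁻¹))
    have h2 : HasFDerivAt (fun y : Fin n → ℝ => (y k) ^ 2 / 2)
        ((2:ℝ)⁻¹ • (x k • prj n k + x k • prj n k)) x := by
      simpa [pow_two, div_eq_inv_mul] using h
    convert h2 using 1
    ext v
    simp
    ring
  have hsum := HasFDerivAt.fun_sum (fun k (_ : k ∈ Finset.univ \ {0}) => h2 k)
  exact (hasFDerivAt_apply 0 x).sub hsum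

lemma Lg_single (x : Fin n → ℝ) (i : Fin n) :
    Lg n x (Pi.single i 1) = if i = 0 then 1 else -(x i) := by
  rcases eq_or_ne i 0 with h | h
  · subst h
    simp [Lg, ContinuousLinearMap.sum_apply, Pi.single_apply]
  · simp [Lg, ContinuousLinearMap.sum_apply, Pi.single_apply, h]


def dfn (x : Fin n → ℝ) (i : Fin n) : ℝ := if i = 0 then 1 else -(x i)

def Ld (n : ℕ) [NeZero n] (j : Fin n) : (Fin n → ℝ) →L[ℝ] ℝ :=
  if j = 0 then 0 else -(prj n j)

lemma hasFDerivAt_dfn (j : Fin n) (x : Fin n → ℝ) :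
    HasFDerivAt (fun y : Fin n → ℝ => dfn y j) (Ld n j) x := by
  unfold dfn Ld
  split_ifs with h
  · exact hasFDerivAt_const 1 x
  · exact (hasFDerivAt_apply j x).neg

lemma hasFDerivAt_ffun {x : Fin n → ℝ} (hx : 0 < gfun n x) :
    HasFDerivAt (ffun n) (-((((1/4) : ℝ) * (gfun n x)⁻¹) • Lg n x)) x := by
  have hlog : HasFDerivAt (fun y => Real.log (gfun n y)) ((gfun n x)⁻¹ • Lg n x) x :=
    (Real.hasDerivAt_log hx.ne').comp_hasFDerivAt x (hasFDerivAt_gfun x)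
  have := hlog.const_mul (-(1/4) : ℝ)
  have h2 : HasFDerivAt (fun y => -(1/4) * Real.log (gfun n y))
      (-((((1/4) : ℝ) * (gfun n x)⁻¹) • Lg n x)) x := by
    simpa [smul_smul, neg_smul] using this
  exact h2

def phi (n : ℕ) [NeZero n] (j : Fin n) (y : Fin n → ℝ) : ℝ :=
  -(1/4) * ((gfun n y)⁻¹ * dfn y j)

lemma pd_ffun (j : Fin n) {y : Fin n → ℝ} (hy : 0 < gfun n y) :
    pd n j (ffun n) y = phi n j y := by
  unfold pd phi
  rw [(hasFDerivAt_ffun hy).fderiv]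
  simp [Lg_single, dfn, mul_assoc]
  split_ifs <;> ring

lemma hasFDerivAt_phi (j : Fin n) {x : Fin n → ℝ} (hx : 0 < gfun n x) :
    HasFDerivAt (phi n j)
      ((-(1/4) : ℝ) • ((gfun n x)⁻¹ • Ld n j +
        dfn x j • (-((gfun n x) ^ 2)⁻¹ • Lg n x))) x := by
  have hinv : HasFDerivAt (fun y => (gfun n y)⁻¹)
      (-((gfun n x) ^ 2)⁻¹ • Lg n x) x :=
    (hasDerivAt_inv hx.ne').comp_hasFDerivAt x (hasFDerivAt_gfun x)
  have hmul := hinv.mul (hasFDerivAt_dfn j x)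
  exact hmul.const_mul (-(1/4) : ℝ)

lemma hess_entry {x : Fin n → ℝ} (hx : 0 < gfun n x) (i j : Fin n) :
    Hess n (ffun n) x i j =
      (1/4) * ((gfun n x) ^ 2)⁻¹ * (dfn x i * dfn x j) +
        (1/4) * (gfun n x)⁻¹ * (if i = j ∧ j ≠ 0 then 1 else 0) := by
  have hopen : IsOpen {y : Fin n → ℝ | 0 < gfun n y} := by
    have hc : Continuous (gfun n) :=
      Differentiable.continuous fun y => (hasFDerivAt_gfun y).differentiableAt
    exact isOpen_lt continuous_const hc
  have hEv : pd n j (ffun n) =ᶠ[nhds x] phi n j := by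
    filter_upwards [hopen.mem_nhds hx] with y hy using pd_ffun j hy
  have hfd : fderiv ℝ (pd n j (ffun n)) x = fderiv ℝ (phi n j) x := hEv.fderiv_eq
  show fderiv ℝ (pd n j (ffun n)) x (Pi.single i 1) = _
  rw [hfd, (hasFDerivAt_phi j hx).fderiv]
  have hLd : Ld n j (Pi.single i 1) = if j = 0 then 0 else -(if j = i then 1 else 0) := by
    unfold Ld
    rcases eq_or_ne j 0 with h | h
    · simp [h]
    · simp [h, ContinuousLinearMap.proj_apply, Pi.single_apply]
  simp only [ContinuousLinearMap.smul_apply, ContinuousLinearMap.add_apply,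
    ContinuousLinearMap.neg_apply, Lg_single, hLd, smul_eq_mul]
  rcases eq_or_ne j 0 with hj | hj
  · subst hj
    simp [dfn]
    rcases eq_or_ne i 0 with hi | hi <;> simp [hi] <;> ring
  · rcases eq_or_ne i j with hij | hij
    · subst hij
      simp [dfn, hj]
      ring
    · simp [dfn, hj, hij, Ne.symm hij]
      rcases eq_or_ne i 0 with hi | hi <;> simp [hi, Ne.symm hj] <;> ring

lemma ite_symm_helper (i j : Fin n) :
    (if i = j ∧ j ≠ 0 then (1:ℝ) else 0) = if j = i ∧ i ≠ 0 then 1 else 0 := by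
  by_cases h : i = j
  · subst h; simp
  · simp [h, Ne.symm h]


/-- the Hessian of `f = -(1/4) ln g` is positive definite wherever `g > 0`;
that is, `f` is strictly convex there. -/
theorem hessian_posDef (n : ℕ) [NeZero n] (hn : 2 ≤ n) (x : Fin n → ℝ)
    (hx : 0 < gfun n x) : (Hess n (ffun n) x).PosDef := by
  have hApos : 0 < (1/4 : ℝ) * ((gfun n x) ^ 2)⁻¹ := by positivity
  have hBpos : 0 < (1/4 : ℝ) * (gfun n x)⁻¹ := by positivity
  refine Matrix.posDef_iff_dotProduct_mulVec.mpr ⟨?_, ?_⟩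
  · ext i j
    rw [Matrix.conjTranspose_apply]
    rw [show (star (Hess n (ffun n) x j i) : ℝ) = Hess n (ffun n) x j i from rfl]
    rw [hess_entry hx, hess_entry hx, ite_symm_helper]
    ring
  · intro v hv
    have hentry : ∀ i j, Hess n (ffun n) x i j
        = (1/4) * ((gfun n x) ^ 2)⁻¹ * (dfn x i * dfn x j)
          + (if j = i then (if i = 0 then 0 else (1/4) * (gfun n x)⁻¹) else 0) := by
      intro i j
      rw [hess_entry hx]
      rcases eq_or_ne j i with h | h
      · subst h
        rcases eq_or_ne j 0 with h0 | h0
        · rw [if_neg (by simp [h0]), if_pos rfl, if_pos h0]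
          ring
        · rw [if_pos ⟨rfl, h0⟩, if_pos rfl, if_neg h0]
          ring
      · rw [if_neg (by exact fun hc => h hc.1.symm), if_neg h]
        ring
    have key : dotProduct (star v) ((Hess n (ffun n) x).mulVec v)
        = (1/4) * ((gfun n x) ^ 2)⁻¹ * (∑ i, dfn x i * v i) ^ 2
          + (1/4) * (gfun n x)⁻¹ * ∑ i ∈ Finset.univ \ {0}, v i ^ 2 := by
      simp only [dotProduct, Matrix.mulVec, hentry, star_trivial]
      have hinner : ∀ i, (∑ j, ((1/4) * ((gfun n x) ^ 2)⁻¹ * (dfn x i * dfn x j)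
            + (if j = i then (if i = 0 then 0 else (1/4) * (gfun n x)⁻¹) else 0)) * v j)
          = (1/4) * ((gfun n x) ^ 2)⁻¹ * dfn x i * (∑ j, dfn x j * v j)
            + (if i = 0 then 0 else (1/4) * (gfun n x)⁻¹) * v i := by
        intro i
        rw [Finset.sum_congr rfl (fun j _ => add_mul _ _ _), Finset.sum_add_distrib]
        congr 1
        · rw [Finset.mul_sum]
          exact Finset.sum_congr rfl fun j _ => by ring
        · rw [Finset.sum_eq_single i]
          · simp
          · intro b _ hb; simp [hb]
          · simp
      calc ∑ i, v i * ∑ j, ((1/4) * ((gfun n x) ^ 2)⁻¹ * (dfn x i * dfn x j)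
              + (if j = i then (if i = 0 then 0 else (1/4) * (gfun n x)⁻¹) else 0)) * v j
          = ∑ i, ((1/4) * ((gfun n x) ^ 2)⁻¹ * (∑ j, dfn x j * v j) * (dfn x i * v i)
              + (if i = 0 then 0 else (1/4) * (gfun n x)⁻¹ * v i ^ 2)) := by
            refine Finset.sum_congr rfl fun i _ => ?_
            rw [hinner i]
            rcases eq_or_ne i 0 with h0 | h0
            · rw [if_pos h0, if_pos h0]
              ring
            · rw [if_neg h0, if_neg h0]
              ring
        _ = _ := by
            rw [Finset.sum_add_distrib, ← Finset.mul_sum]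
            congr 1
            · ring
            · rw [Finset.mul_sum,
                show (Finset.univ \ {0} : Finset (Fin n)) =
                  Finset.univ.filter (fun i => ¬ i = 0) from by ext i; simp,
                Finset.sum_filter]
              refine Finset.sum_congr rfl fun i _ => ?_
              rcases eq_or_ne i 0 with h0 | h0
              · rw [if_pos h0, if_neg (by simp [h0])]
              · rw [if_neg h0, if_pos h0]
    rw [key]
    by_cases hvz : ∀ i, i ≠ 0 → v i = 0
    · have hv0 : v 0 ≠ 0 := by
        intro h0
        apply hv
        funext i
        by_cases h : i = 0
        · simpa [h] using h0
        · simpa using hvz i h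
      have hS : (∑ i, dfn x i * v i) = v 0 := by
        rw [Finset.sum_eq_single 0]
        · simp [dfn]
        · intro b _ hb; simp [hvz b hb]
        · simp
      have h1 : 0 < (1/4) * ((gfun n x) ^ 2)⁻¹ * (∑ i, dfn x i * v i) ^ 2 := by
        rw [hS]; exact mul_pos hApos (sq_pos_of_ne_zero hv0)
      have h2 : 0 ≤ (1/4) * (gfun n x)⁻¹ * ∑ i ∈ Finset.univ \ {0}, v i ^ 2 :=
        mul_nonneg hBpos.le (Finset.sum_nonneg fun i _ => sq_nonneg _)
      linarith
    · push_neg at hvz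
      obtain ⟨i0, hi0, hvi0⟩ := hvz
      have h2 : 0 < (1/4) * (gfun n x)⁻¹ * ∑ i ∈ Finset.univ \ {0}, v i ^ 2 := by
        refine mul_pos hBpos (Finset.sum_pos' (fun i _ => sq_nonneg _) ?_)
        exact ⟨i0, by simp [hi0], sq_pos_of_ne_zero hvi0⟩
      have h1 : 0 ≤ (1/4) * ((gfun n x) ^ 2)⁻¹ * (∑ i, dfn x i * v i) ^ 2 :=
        mul_nonneg hApos.le (sq_nonneg _)
      linarith
end
end

section
/- Let $n\geq 2$, $a \neq 0$ a real constant, $g(x) = x_1 - \sum_{k=2}^n x_k^2/2 > 0$, $f(x) = -\tfrac{1}{4}\ln g(x)$, $D = \det(\mathrm{Hess}\, f) = \tfrac{1}{4^n g^{n+1}}$, and let $(f^{ij})$ be the inverse Hessian matrix of $f$. Then $\sum_{i,j} f^{ij} \partial_i\partial_j (D^a) = 4(n+1)\big[(n+1)a^2 + na\big] D^a$ pointwise on the domain. -/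
noncomputable section

set_option linter.unusedSectionVars false
set_option linter.unusedVariables false

open Finset

namespace SfD

open Finset

variable (n : ℕ) [NeZero n]

/-- gradient components of g -/
def wv (y : Fin n → ℝ) (i : Fin n) : ℝ := if i = 0 then 1 else -(y i)

/-- derivative of g as a CLM -/
def Lg (y : Fin n → ℝ) : (Fin n → ℝ) →L[ℝ] ℝ :=
  (ContinuousLinearMap.proj 0 : (Fin n → ℝ) →L[ℝ] ℝ)
    - ∑ k ∈ Finset.univ \ {0}, y k • (ContinuousLinearMap.proj k : (Fin n → ℝ) →L[ℝ] ℝ)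

lemma hasFDerivAt_apply (k : Fin n) (y : Fin n → ℝ) :
    HasFDerivAt (fun z : Fin n → ℝ => z k)
      (ContinuousLinearMap.proj k : (Fin n → ℝ) →L[ℝ] ℝ) y :=
  (ContinuousLinearMap.proj k : (Fin n → ℝ) →L[ℝ] ℝ).hasFDerivAt

lemma hasFDerivAt_gfun (y : Fin n → ℝ) : HasFDerivAt (gfun n) (Lg n y) y := by
  have hp : ∀ k ∈ Finset.univ \ ({0} : Finset (Fin n)),
      HasFDerivAt (fun z : Fin n → ℝ => z k ^ 2 / 2)
        (y k • (ContinuousLinearMap.proj k : (Fin n → ℝ) →L[ℝ] ℝ)) y := by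
    intro k _
    have h := ((hasFDerivAt_apply n k y).fun_mul (hasFDerivAt_apply n k y)).const_mul (1/2 : ℝ)
    have e1 : (fun z : Fin n → ℝ => (1/2 : ℝ) * (z k * z k)) = fun z : Fin n → ℝ => z k ^ 2 / 2 := by
      funext z; ring
    rw [e1] at h
    refine h.congr_fderiv ?_
    ext v
    simp only [ContinuousLinearMap.smul_apply, ContinuousLinearMap.add_apply,
      ContinuousLinearMap.proj_apply, smul_eq_mul]
    ring
  exact (hasFDerivAt_apply n 0 y).sub (HasFDerivAt.fun_sum hp)

lemma Lg_single (y : Fin n → ℝ) (i : Fin n) : Lg n y (Pi.single i 1) = wv n y i := by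
  simp only [Lg, ContinuousLinearMap.sub_apply, ContinuousLinearMap.sum_apply,
    ContinuousLinearMap.smul_apply, ContinuousLinearMap.proj_apply, smul_eq_mul,
    Pi.single_apply, Finset.sdiff_singleton_eq_erase]
  by_cases hi : i = 0
  · subst hi
    rw [if_pos rfl]
    have : ∀ k ∈ Finset.univ.erase (0 : Fin n), y k * (if k = (0:Fin n) then (1:ℝ) else 0) = 0 := by
      intro k hk
      rw [if_neg (Finset.ne_of_mem_erase hk), mul_zero]
    rw [Finset.sum_congr rfl this, Finset.sum_const_zero]
    simp [wv]
  · rw [if_neg (fun h => hi h.symm)]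
    have : ∀ k ∈ Finset.univ.erase (0 : Fin n),
        y k * (if k = i then (1:ℝ) else 0) = if k = i then y k else 0 := by
      intro k _
      split <;> simp
    rw [Finset.sum_congr rfl this, Finset.sum_ite_eq']
    simp [wv, hi, Ne.symm hi]

lemma pd_hasF {h : (Fin n → ℝ) → ℝ} {L : (Fin n → ℝ) →L[ℝ] ℝ} {y : Fin n → ℝ}
    (hh : HasFDerivAt h L y) (i : Fin n) : pd n i h y = L (Pi.single i 1) := by
  simp only [pd, hh.fderiv]

/-- the domain -/
def U : Set (Fin n → ℝ) := {y | 0 < gfun n y}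

lemma U_open : IsOpen (U n) := by
  have hc : Continuous (gfun n) := by
    rw [continuous_iff_continuousAt]
    exact fun y => (hasFDerivAt_gfun n y).differentiableAt.continuousAt
  exact isOpen_lt continuous_const hc

lemma pd_congr {h1 h2 : (Fin n → ℝ) → ℝ} (he : ∀ z ∈ U n, h1 z = h2 z)
    {y : Fin n → ℝ} (hy : y ∈ U n) (i : Fin n) : pd n i h1 y = pd n i h2 y := by
  simp only [pd]
  rw [Filter.EventuallyEq.fderiv_eq
    (Filter.eventuallyEq_of_mem ((U_open n).mem_nhds hy) he)]

lemma hasFDerivAt_gpow (q : ℝ) {y : Fin n → ℝ} (hy : 0 < gfun n y) :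
    HasFDerivAt (fun z => gfun n z ^ q) ((q * gfun n y ^ (q - 1)) • Lg n y) y :=
  (hasFDerivAt_gfun n y).rpow_const (Or.inl hy.ne')

def Emat (i j : Fin n) : ℝ := if i = j ∧ i ≠ 0 then 1 else 0

/-- second-layer derivative workhorse -/
lemma pd_pow_wv (c q : ℝ) (j i : Fin n) {y : Fin n → ℝ} (hy : 0 < gfun n y) :
    pd n i (fun z => c * (gfun n z ^ q * wv n z j)) y
      = c * (q * gfun n y ^ (q - 1) * wv n y i * wv n y j - gfun n y ^ q * Emat n i j) := by
  by_cases hj : j = 0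
  · subst hj
    have e1 : (fun z => c * (gfun n z ^ q * wv n z 0)) = fun z => c * gfun n z ^ q := by
      funext z; simp [wv]
    rw [e1]
    rw [pd_hasF n ((hasFDerivAt_gpow n q hy).const_mul c) i]
    simp only [ContinuousLinearMap.smul_apply, smul_eq_mul, Lg_single]
    have h0 : Emat n i 0 = 0 := by
      simp only [Emat]
      rw [if_neg (by tauto)]
    have h1 : wv n y 0 = 1 := by simp [wv]
    rw [h0, h1]; ring
  · have e1 : (fun z => c * (gfun n z ^ q * wv n z j)) = fun z => c * (gfun n z ^ q * -(z j)) := by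
      funext z; simp [wv, hj]
    rw [e1]
    have hd := ((hasFDerivAt_gpow n q hy).fun_mul ((hasFDerivAt_apply n j y).fun_neg)).const_mul c
    rw [pd_hasF n hd i]
    simp only [ContinuousLinearMap.smul_apply, ContinuousLinearMap.add_apply,
      ContinuousLinearMap.neg_apply, ContinuousLinearMap.proj_apply, smul_eq_mul, Lg_single,
      Pi.single_apply]
    have hw : wv n y j = -(y j) := by simp [wv, hj]
    have hE : Emat n i j = if j = i then 1 else 0 := by
      by_cases hij : i = j
      · subst hij; simp [Emat, hj]
      · simp only [Emat, hij, false_and, if_false]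
        exact (if_neg (fun h => hij h.symm)).symm
    rw [hw, hE]
    split <;> ring

lemma pd_ffun {y : Fin n → ℝ} (hy : 0 < gfun n y) (j : Fin n) :
    pd n j (ffun n) y = -(1/4) * (gfun n y ^ (-1 : ℝ) * wv n y j) := by
  have hd := ((hasFDerivAt_gfun n y).log hy.ne').const_mul (-(1/4) : ℝ)
  have : pd n j (ffun n) y
      = ((-(1/4) : ℝ) • ((gfun n y)⁻¹ • Lg n y)) (Pi.single j 1) := pd_hasF n hd j
  rw [this]
  simp only [ContinuousLinearMap.smul_apply, smul_eq_mul, Lg_single]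
  rw [Real.rpow_neg_one]

def Hmat (y : Fin n → ℝ) : Matrix (Fin n) (Fin n) ℝ :=
  fun i j => (4 * gfun n y ^ 2)⁻¹ * (wv n y i * wv n y j + gfun n y * Emat n i j)

lemma hess_ffun {y : Fin n → ℝ} (hy : 0 < gfun n y) : Hess n (ffun n) y = Hmat n y := by
  funext i j
  have step1 : pd n i (pd n j (ffun n)) y
      = pd n i (fun z => -(1/4) * (gfun n z ^ (-1 : ℝ) * wv n z j)) y :=
    pd_congr n (fun z hz => pd_ffun n hz j) hy i
  show pd n i (pd n j (ffun n)) y = _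
  rw [step1, pd_pow_wv n (-(1/4)) (-1) j i hy]
  have e2 : gfun n y ^ ((-1 : ℝ) - 1) = (gfun n y ^ 2)⁻¹ := by
    rw [show ((-1 : ℝ) - 1) = -(2 : ℕ) by norm_num, Real.rpow_neg hy.le, Real.rpow_natCast]
  have e1 : gfun n y ^ (-1 : ℝ) = (gfun n y)⁻¹ := Real.rpow_neg_one _
  rw [e1, e2, Hmat]
  have hg : gfun n y ≠ 0 := hy.ne'
  field_simp
  ring

def Mp (y : Fin n → ℝ) : Matrix (Fin n) (Fin n) ℝ :=
  fun i j => wv n y i * wv n y j + gfun n y * Emat n i j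

def Amat (y : Fin n → ℝ) : Matrix (Fin n) (Fin n) ℝ :=
  fun i j => if j = 0 then wv n y i else if i = j then 1 else 0

def Dmat (y : Fin n → ℝ) : Matrix (Fin n) (Fin n) ℝ :=
  Matrix.diagonal (fun k => if k = 0 then (1:ℝ) else gfun n y)

lemma factor (y : Fin n → ℝ) : Mp n y = Amat n y * (Dmat n y * (Amat n y).transpose) := by
  funext i j
  rw [Matrix.mul_apply]
  have hterm : ∀ k, Amat n y i k * (Dmat n y * (Amat n y).transpose) k j
      = Amat n y i k * ((if k = 0 then (1:ℝ) else gfun n y) * Amat n y j k) := by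
    intro k
    simp only [Dmat]
    rw [Matrix.diagonal_mul, Matrix.transpose_apply]
  rw [Finset.sum_congr rfl (fun k _ => hterm k)]
  rw [← Finset.add_sum_erase _ _ (Finset.mem_univ (0 : Fin n))]
  have h0 : Amat n y i 0 * ((if (0:Fin n) = 0 then (1:ℝ) else gfun n y) * Amat n y j 0)
      = wv n y i * wv n y j := by
    simp [Amat]
  have hrest : ∀ k ∈ Finset.univ.erase (0 : Fin n),
      Amat n y i k * ((if k = 0 then (1:ℝ) else gfun n y) * Amat n y j k)
        = if k = i ∧ i = j ∧ i ≠ 0 then gfun n y else 0 := by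
    intro k hk
    have hk0 : k ≠ 0 := Finset.ne_of_mem_erase hk
    simp only [Amat, if_neg hk0]
    by_cases hik : i = k
    · subst hik
      by_cases hji : j = i
      · subst hji
        rw [if_pos (show j = j ∧ j = j ∧ j ≠ 0 from ⟨rfl, rfl, hk0⟩)]
        simp
      · rw [if_pos rfl, if_neg hji, if_neg (fun h => hji h.2.1.symm)]
        ring
    · rw [if_neg hik, zero_mul, if_neg (fun h => hik h.1.symm)]
  rw [Finset.sum_congr rfl hrest]
  by_cases hij : i = j ∧ i ≠ 0
  · obtain ⟨hij1, hi0⟩ := hij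
    have : ∀ k ∈ Finset.univ.erase (0 : Fin n),
        (if k = i ∧ i = j ∧ i ≠ 0 then gfun n y else 0) = if k = i then gfun n y else 0 := by
      intro k _
      by_cases hk : k = i
      · rw [if_pos ⟨hk, hij1, hi0⟩, if_pos hk]
      · rw [if_neg (by tauto), if_neg hk]
    rw [Finset.sum_congr rfl this, Finset.sum_ite_eq',
      if_pos (Finset.mem_erase.2 ⟨hi0, Finset.mem_univ i⟩), h0, Mp]
    have hE : Emat n i j = 1 := by
      simp only [Emat]
      rw [if_pos ⟨hij1, hi0⟩]
    rw [hE]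
    ring
  · have : ∀ k ∈ Finset.univ.erase (0 : Fin n),
        (if k = i ∧ i = j ∧ i ≠ 0 then gfun n y else 0) = 0 := by
      intro k _
      rw [if_neg (by tauto)]
    rw [Finset.sum_congr rfl this, Finset.sum_const_zero, h0, Mp]
    have : Emat n i j = 0 := by
      simp only [Emat]
      rw [if_neg (by tauto)]
    rw [this]
    ring

lemma det_Amat (y : Fin n → ℝ) : (Amat n y).det = 1 := by
  rw [Matrix.det_of_lowerTriangular (Amat n y) ?tri]
  case tri =>
    intro i j hij
    have hij' : (i : Fin n) < j := hij
    have hj0 : j ≠ 0 := by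
      intro h
      subst h
      exact absurd hij' (by simp [Fin.lt_def])
    simp only [Amat, if_neg hj0]
    rw [if_neg (ne_of_lt hij')]
  apply Finset.prod_eq_one
  intro i _
  by_cases hi : i = 0
  · subst hi; simp [Amat, wv]
  · simp [Amat, hi]

lemma det_Mp (y : Fin n → ℝ) : (Mp n y).det = gfun n y ^ (n - 1) := by
  rw [factor, Matrix.det_mul, Matrix.det_mul, Matrix.det_transpose, det_Amat,
    Dmat, Matrix.det_diagonal]
  rw [← Finset.mul_prod_erase _ _ (Finset.mem_univ (0 : Fin n))]
  rw [if_pos rfl]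
  have : ∀ k ∈ Finset.univ.erase (0 : Fin n),
      (if k = 0 then (1:ℝ) else gfun n y) = gfun n y := by
    intro k hk
    rw [if_neg (Finset.ne_of_mem_erase hk)]
  rw [Finset.prod_congr rfl this, Finset.prod_const,
    Finset.card_erase_of_mem (Finset.mem_univ _), Finset.card_univ, Fintype.card_fin]
  ring

lemma det_hess {y : Fin n → ℝ} (hy : 0 < gfun n y) :
    (Hess n (ffun n) y).det = ((4:ℝ) ^ n * gfun n y ^ (n + 1))⁻¹ := by
  rw [hess_ffun n hy]
  have hs : Hmat n y = ((4 * gfun n y ^ 2)⁻¹ : ℝ) • Mp n y := by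
    funext i j
    simp only [Hmat, Mp, Matrix.smul_apply, smul_eq_mul]
  rw [hs, Matrix.det_smul, det_Mp, Fintype.card_fin]
  have hg : gfun n y ≠ 0 := hy.ne'
  have hn1 : 1 ≤ n := Nat.one_le_iff_ne_zero.2 (NeZero.ne n)
  have key : ((4 : ℝ) * gfun n y ^ 2) ^ n = ((4:ℝ) ^ n * gfun n y ^ (n + 1)) * gfun n y ^ (n - 1) := by
    rw [mul_pow, ← pow_mul, mul_assoc, ← pow_add]
    have h2 : n + 1 + (n - 1) = 2 * n := by omega
    rw [h2]
  rw [inv_pow, key, mul_inv, mul_assoc, inv_mul_cancel₀ (pow_ne_zero _ hg), mul_one]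

lemma Da_eq (a : ℝ) {y : Fin n → ℝ} (hy : 0 < gfun n y) :
    (Hess n (ffun n) y).det ^ a
      = ((4:ℝ) ^ n) ^ (-a) * gfun n y ^ (-(a * (n + 1 : ℝ))) := by
  rw [det_hess n hy]
  have h4 : (0:ℝ) < (4:ℝ) ^ n := by positivity
  have hg : (0:ℝ) < gfun n y ^ (n + 1) := by positivity
  rw [Real.inv_rpow (by positivity), ← Real.rpow_neg (by positivity),
    Real.mul_rpow h4.le hg.le]
  congr 1
  rw [← Real.rpow_natCast (gfun n y) (n + 1), ← Real.rpow_mul hy.le]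
  congr 1
  push_cast
  ring

def Nmat (y : Fin n → ℝ) : Matrix (Fin n) (Fin n) ℝ :=
  fun i j =>
    if i = 0 then (if j = 0 then 2 * y 0 - gfun n y else y j)
    else if j = 0 then y i else if i = j then 1 else 0

def Kmat (y : Fin n → ℝ) : Matrix (Fin n) (Fin n) ℝ :=
  fun i j => 4 * gfun n y * Nmat n y i j

lemma sum_sq (y : Fin n → ℝ) :
    ∑ k ∈ Finset.univ.erase (0 : Fin n), y k ^ 2 = 2 * (y 0 - gfun n y) := by
  have : gfun n y = y 0 - (∑ k ∈ Finset.univ.erase (0 : Fin n), y k ^ 2) / 2 := by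
    rw [gfun, Finset.sdiff_singleton_eq_erase, Finset.sum_div]
  rw [this]
  ring

lemma sum_wv_N (y : Fin n → ℝ) (l : Fin n) :
    ∑ j, wv n y j * Nmat n y j l = if l = 0 then gfun n y else 0 := by
  rw [← Finset.add_sum_erase _ _ (Finset.mem_univ (0 : Fin n))]
  have h0 : wv n y 0 * Nmat n y 0 l
      = if l = 0 then 2 * y 0 - gfun n y else y l := by
    simp [wv, Nmat]
  by_cases hl : l = 0
  · subst hl
    have hrest : ∀ j ∈ Finset.univ.erase (0 : Fin n),
        wv n y j * Nmat n y j 0 = -(y j ^ 2) := by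
      intro j hj
      have hj0 : j ≠ 0 := Finset.ne_of_mem_erase hj
      have h1 : Nmat n y j 0 = y j := by simp [Nmat, hj0]
      have h2 : wv n y j = -(y j) := by simp [wv, hj0]
      rw [h1, h2]
      ring
    rw [h0, if_pos rfl, Finset.sum_congr rfl hrest, Finset.sum_neg_distrib, sum_sq n y]
    norm_num
    ring
  · have hrest : ∀ j ∈ Finset.univ.erase (0 : Fin n),
        wv n y j * Nmat n y j l = if j = l then -(y j) else 0 := by
      intro j hj
      have hj0 : j ≠ 0 := Finset.ne_of_mem_erase hj
      simp only [wv, Nmat, if_neg hj0, if_neg hl]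
      by_cases hjl : j = l
      · rw [if_pos hjl, if_pos hjl]
        ring
      · rw [if_neg hjl, if_neg hjl, mul_zero]
    rw [h0, if_neg hl, Finset.sum_congr rfl hrest, Finset.sum_ite_eq',
      if_pos (Finset.mem_erase.2 ⟨hl, Finset.mem_univ l⟩), if_neg hl]
    ring

lemma sum_E_N (y : Fin n → ℝ) (i l : Fin n) :
    ∑ j, Emat n i j * Nmat n y j l = if i = 0 then 0 else Nmat n y i l := by
  by_cases hi : i = 0
  · subst hi
    rw [if_pos rfl]
    apply Finset.sum_eq_zero
    intro j _
    have : Emat n 0 j = 0 := by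
      simp only [Emat]
      rw [if_neg (by tauto)]
    rw [this, zero_mul]
  · rw [if_neg hi]
    have hterm : ∀ j ∈ (Finset.univ : Finset (Fin n)),
        Emat n i j * Nmat n y j l = if j = i then Nmat n y j l else 0 := by
      intro j _
      by_cases hij : j = i
      · subst hij
        have : Emat n j j = 1 := by simp [Emat, hi]
        rw [this, one_mul, if_pos rfl]
      · have : Emat n i j = 0 := by
          simp only [Emat]
          rw [if_neg (fun h => hij h.1.symm)]
        rw [this, zero_mul, if_neg hij]
    rw [Finset.sum_congr rfl hterm, Finset.sum_ite_eq', if_pos (Finset.mem_univ i)]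

lemma Nmat_symm (y : Fin n → ℝ) (i j : Fin n) : Nmat n y i j = Nmat n y j i := by
  simp only [Nmat]
  by_cases hi : i = 0 <;> by_cases hj : j = 0
  · subst hi; subst hj; rfl
  · subst hi; rw [if_pos rfl, if_neg hj, if_neg hj, if_pos rfl]
  · subst hj; rw [if_neg hi, if_pos rfl, if_pos rfl, if_neg hi]
  · rw [if_neg hi, if_neg hj, if_neg hj, if_neg hi]
    by_cases hij : i = j
    · rw [if_pos hij, if_pos hij.symm]
    · rw [if_neg hij, if_neg (fun h => hij h.symm)]

lemma HK_eq_one {y : Fin n → ℝ} (hy : 0 < gfun n y) : Hmat n y * Kmat n y = 1 := by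
  funext i l
  rw [Matrix.mul_apply]
  have hg : gfun n y ≠ 0 := hy.ne'
  have hterm : ∀ j ∈ (Finset.univ : Finset (Fin n)),
      Hmat n y i j * Kmat n y j l
        = (gfun n y)⁻¹ * (wv n y i * (wv n y j * Nmat n y j l))
          + Emat n i j * Nmat n y j l := by
    intro j _
    simp only [Hmat, Kmat]
    field_simp
  rw [Finset.sum_congr rfl hterm, Finset.sum_add_distrib, ← Finset.mul_sum, ← Finset.mul_sum,
    sum_wv_N n y l, sum_E_N n y i l, Matrix.one_apply]
  by_cases hi : i = 0 <;> by_cases hl : l = 0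
  · subst hi; subst hl
    rw [if_pos rfl, if_pos rfl, if_pos rfl]
    have : wv n y 0 = 1 := by simp [wv]
    rw [this]
    field_simp
    norm_num
  · subst hi
    rw [if_pos rfl, if_neg hl, if_neg (fun h => hl (h.symm))]
    ring
  · subst hl
    rw [if_pos rfl, if_neg hi, if_neg hi]
    have h1 : wv n y i = -(y i) := by simp [wv, hi]
    have h2 : Nmat n y i 0 = y i := by simp [Nmat, hi]
    rw [h1, h2]
    field_simp
    ring
  · rw [if_neg hl, if_neg hi]
    have h2 : Nmat n y i l = if i = l then 1 else 0 := by simp [Nmat, hi, hl]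
    rw [h2]
    ring

lemma inv_hess {y : Fin n → ℝ} (hy : 0 < gfun n y) :
    (Hess n (ffun n) y)⁻¹ = Kmat n y := by
  rw [hess_ffun n hy]
  exact Matrix.inv_eq_right_inv (HK_eq_one n hy)

lemma pd_Da (a : ℝ) {z : Fin n → ℝ} (hz : 0 < gfun n z) (j : Fin n) :
    pd n j (fun u => (Hess n (ffun n) u).det ^ a) z
      = (((4:ℝ) ^ n) ^ (-a) * -(a * (n + 1 : ℝ)))
        * (gfun n z ^ (-(a * (n + 1 : ℝ)) - 1) * wv n z j) := by
  have step1 : pd n j (fun u => (Hess n (ffun n) u).det ^ a) z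
      = pd n j (fun u => ((4:ℝ) ^ n) ^ (-a) * gfun n u ^ (-(a * (n + 1 : ℝ)))) z :=
    pd_congr n (fun u hu => Da_eq n a hu) hz j
  rw [step1,
    pd_hasF n ((hasFDerivAt_gpow n (-(a * (n + 1 : ℝ))) hz).const_mul (((4:ℝ) ^ n) ^ (-a))) j]
  simp only [ContinuousLinearMap.smul_apply, smul_eq_mul, Lg_single]
  ring

lemma S3 (y : Fin n → ℝ) :
    ∑ i, ∑ j, Nmat n y i j * (wv n y i * wv n y j) = gfun n y := by
  have hin : ∀ i ∈ (Finset.univ : Finset (Fin n)),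
      ∑ j, Nmat n y i j * (wv n y i * wv n y j) = if i = 0 then gfun n y else 0 := by
    intro i _
    have h1 : ∀ j ∈ (Finset.univ : Finset (Fin n)),
        Nmat n y i j * (wv n y i * wv n y j) = wv n y i * (wv n y j * Nmat n y j i) := by
      intro j _
      rw [Nmat_symm n y i j]
      ring
    rw [Finset.sum_congr rfl h1, ← Finset.mul_sum, sum_wv_N n y i]
    by_cases hi : i = 0
    · subst hi
      simp [wv]
    · simp [wv, hi]
  rw [Finset.sum_congr rfl hin, Finset.sum_ite_eq', if_pos (Finset.mem_univ 0)]

lemma S4 (y : Fin n → ℝ) :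
    ∑ i, ∑ j, Nmat n y i j * Emat n i j = (n : ℝ) - 1 := by
  have hin : ∀ i ∈ (Finset.univ : Finset (Fin n)),
      ∑ j, Nmat n y i j * Emat n i j = if i = 0 then (0:ℝ) else 1 := by
    intro i _
    have h1 : ∀ j ∈ (Finset.univ : Finset (Fin n)),
        Nmat n y i j * Emat n i j = Emat n i j * Nmat n y j i := by
      intro j _
      rw [Nmat_symm n y i j]
      ring
    rw [Finset.sum_congr rfl h1, sum_E_N n y i i]
    by_cases hi : i = 0
    · simp [hi]
    · rw [if_neg hi, if_neg hi]
      simp [Nmat, hi]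
  rw [Finset.sum_congr rfl hin,
    ← Finset.add_sum_erase _ _ (Finset.mem_univ (0 : Fin n)), if_pos rfl, zero_add]
  have h2 : ∀ i ∈ Finset.univ.erase (0 : Fin n), (if i = 0 then (0:ℝ) else 1) = 1 :=
    fun i hi => if_neg (Finset.ne_of_mem_erase hi)
  rw [Finset.sum_congr rfl h2, Finset.sum_const,
    Finset.card_erase_of_mem (Finset.mem_univ _), Finset.card_univ, Fintype.card_fin,
    nsmul_eq_mul, mul_one]
  have h1 : 1 ≤ n := Nat.one_le_iff_ne_zero.2 (NeZero.ne n)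
  rw [Nat.cast_sub h1]
  norm_num

end SfD

/-- with `D = det(Hess f)` and `(f^{ij})` the inverse Hessian of `f`,
`∑ f^{ij} ∂ᵢ∂ⱼ(Dᵃ) = 4(n+1)[(n+1)a² + na] Dᵃ` on `{g > 0}`. -/
theorem sum_finv_Da (n : ℕ) [NeZero n] (hn : 2 ≤ n) (a : ℝ) (ha : a ≠ 0)
    (x : Fin n → ℝ) (hx : 0 < gfun n x) :
    ∑ i, ∑ j, (Hess n (ffun n) x)⁻¹ i j *
        pd n i (pd n j (fun y => (Hess n (ffun n) y).det ^ a)) x =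
      4 * (n + 1) * ((n + 1) * a ^ 2 + n * a) * (Hess n (ffun n) x).det ^ a := by
  open SfD in
  set p : ℝ := -(a * (n + 1 : ℝ)) with hp
  set c0 : ℝ := ((4:ℝ) ^ n) ^ (-a) with hc0
  set G : ℝ := gfun n x with hG
  have hGpos : 0 < G := hx
  have hGne : G ≠ 0 := hGpos.ne'
  have hsecond : ∀ i j : Fin n,
      pd n i (pd n j (fun y => (Hess n (ffun n) y).det ^ a)) x
        = (c0 * p) * ((p - 1) * G ^ (p - 1 - 1) * wv n x i * wv n x j
            - G ^ (p - 1) * Emat n i j) := by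
    intro i j
    rw [pd_congr n (fun z hz => pd_Da n a hz j) hx i, pd_pow_wv n (c0 * p) (p - 1) j i hx]
  have hsum : ∑ i, ∑ j, (Hess n (ffun n) x)⁻¹ i j *
        pd n i (pd n j (fun y => (Hess n (ffun n) y).det ^ a)) x
      = (4 * G * (c0 * p) * ((p - 1) * G ^ (p - 1 - 1)))
          * (∑ i, ∑ j, Nmat n x i j * (wv n x i * wv n x j))
        - (4 * G * (c0 * p) * G ^ (p - 1)) * (∑ i, ∑ j, Nmat n x i j * Emat n i j) := by
    rw [inv_hess n hx, Finset.mul_sum, Finset.mul_sum, ← Finset.sum_sub_distrib]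
    apply Finset.sum_congr rfl
    intro i _
    rw [Finset.mul_sum, Finset.mul_sum, ← Finset.sum_sub_distrib]
    apply Finset.sum_congr rfl
    intro j _
    rw [hsecond i j]
    simp only [Kmat]
    ring
  rw [hsum, S3 n x, S4 n x, Da_eq n a hx, ← hG, ← hc0, ← hp]
  have e1 : G ^ (p - 1 - 1) = G ^ p / (G * G) := by
    rw [Real.rpow_sub hGpos, Real.rpow_sub hGpos, Real.rpow_one, div_div]
  have e2 : G ^ (p - 1) = G ^ p / G := by
    rw [Real.rpow_sub hGpos, Real.rpow_one]
  rw [e1, e2, hp]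
  field_simp
  ring
end
end

section
/- Let $n\geq 2$, $f(x) = -\tfrac{1}{4}\ln(x_1 - \sum_{k=2}^n x_k^2/2)$ on $\Omega = \{x : x_1 > \sum_{k=2}^n x_k^2/2\}$, and $w = \det(\mathrm{Hess}\, f)^a$ with $a = -\tfrac{n}{n+1}$. Then $f$ satisfies the affine maximal type equation $\sum_{i,j} f^{ij} w_{ij} = 0$, where $(f^{ij})$ is the inverse Hessian of $f$ and $w_{ij} = \partial_i\partial_j w$. Moreover, for $a \neq 0$, the equation $\sum f^{ij} w_{ij} = 0$ holds on $\Omega$ only if $a = -\tfrac{n}{n+1}$. -/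
set_option linter.unusedSectionVars false
set_option maxHeartbeats 1000000


noncomputable section

namespace AMT

variable (n : ℕ) [NeZero n]

/-- the coordinate projection as a CLM -/
def pr (k : Fin n) : (Fin n → ℝ) →L[ℝ] ℝ :=
  ContinuousLinearMap.proj (R := ℝ) (φ := fun _ : Fin n => ℝ) k

lemma pr_apply (k : Fin n) (v : Fin n → ℝ) : pr n k v = v k := rfl

lemma hasFDerivAt_pr (k : Fin n) (x : Fin n → ℝ) :
    HasFDerivAt (fun y : Fin n → ℝ => y k) (pr n k) x :=
  (pr n k).hasFDerivAt

/-- gradient components of g -/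
def gd (i : Fin n) (x : Fin n → ℝ) : ℝ := if i = 0 then 1 else -(x i)

/-- the derivative CLM of g -/
def gL (x : Fin n → ℝ) : (Fin n → ℝ) →L[ℝ] ℝ :=
  pr n 0 - ∑ k ∈ Finset.univ \ {0}, x k • pr n k

lemma hasFDerivAt_gfun (x : Fin n → ℝ) : HasFDerivAt (gfun n) (gL n x) x := by
  have h2 : HasFDerivAt (fun y : Fin n → ℝ => ∑ k ∈ Finset.univ \ {0}, (y k) ^ 2 / 2)
      (∑ k ∈ Finset.univ \ {0}, x k • pr n k) x := by
    apply HasFDerivAt.fun_sum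
    intro k _
    have hk := hasFDerivAt_pr n k x
    have := (hk.mul hk).const_mul (1/2 : ℝ)
    refine (this.congr_fderiv ?_).congr_of_eventuallyEq (Filter.Eventually.of_forall fun y => ?_)
    · ext v
      simp [ContinuousLinearMap.smul_apply, pr_apply]
      ring
    · simp only [Pi.mul_apply]; ring
  exact (hasFDerivAt_pr n 0 x).sub h2

lemma gL_apply (x : Fin n → ℝ) (i : Fin n) : gL n x (Pi.single i 1) = gd n i x := by
  simp only [gL, gd, ContinuousLinearMap.sub_apply, ContinuousLinearMap.sum_apply,
    ContinuousLinearMap.smul_apply, pr_apply, smul_eq_mul, Pi.single_apply]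
  rcases eq_or_ne i 0 with h | h
  · subst h
    simp
  · rw [if_neg (fun hh : (0:Fin n) = i => h hh.symm)]
    rw [Finset.sum_eq_single i]
    · simp [h]
    · intro b _ hb; simp [hb]
    · intro hi; simp [Finset.mem_sdiff, h] at hi

lemma pd_gfun (i : Fin n) (x : Fin n → ℝ) : pd n i (gfun n) x = gd n i x := by
  simp only [pd, (hasFDerivAt_gfun n x).fderiv, gL_apply]

lemma cont_gfun : Continuous (gfun n) := by
  rw [continuous_iff_continuousAt]
  exact fun x => (hasFDerivAt_gfun n x).differentiableAt.continuousAt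

lemma isOpen_U : IsOpen {x : Fin n → ℝ | 0 < gfun n x} :=
  isOpen_lt continuous_const (cont_gfun n)

end AMT

namespace AMT
variable (n : ℕ) [NeZero n]

/-- first partials of f -/
def fd (j : Fin n) (x : Fin n → ℝ) : ℝ := -(1/4) * ((gfun n x)⁻¹ * gd n j x)

lemma hasFDerivAt_ffun (x : Fin n → ℝ) (hg : gfun n x ≠ 0) :
    HasFDerivAt (ffun n) ((-(1/4) * (gfun n x)⁻¹) • gL n x) x := by
  have hlog : HasDerivAt Real.log (gfun n x)⁻¹ (gfun n x) := Real.hasDerivAt_log hg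
  have h := (hlog.comp_hasFDerivAt x (hasFDerivAt_gfun n x)).const_mul (-(1/4) : ℝ)
  refine h.congr_fderiv ?_
  ext v
  simp [ContinuousLinearMap.smul_apply, smul_eq_mul]
  ring

lemma pd_ffun (j : Fin n) (x : Fin n → ℝ) (hg : gfun n x ≠ 0) :
    pd n j (ffun n) x = fd n j x := by
  simp only [pd, (hasFDerivAt_ffun n x hg).fderiv, ContinuousLinearMap.smul_apply,
    gL_apply, smul_eq_mul, fd]
  ring

/-- derivative CLM of gd j -/
def gdL (j : Fin n) : (Fin n → ℝ) →L[ℝ] ℝ := if j = 0 then 0 else -(pr n j)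

lemma hasFDerivAt_gd (j : Fin n) (x : Fin n → ℝ) :
    HasFDerivAt (gd n j) (gdL n j) x := by
  show HasFDerivAt (fun y : Fin n → ℝ => if j = 0 then (1:ℝ) else -(y j)) (gdL n j) x
  rcases eq_or_ne j 0 with h | h
  · simp only [gdL, if_pos h]
    exact hasFDerivAt_const 1 x
  · simp only [gdL, if_neg h]
    exact (hasFDerivAt_pr n j x).neg

/-- Hessian entries of g (constant) -/
def gd2 (i j : Fin n) : ℝ := if j = 0 then 0 else if i = j then -1 else 0

lemma gdL_apply (i j : Fin n) : gdL n j (Pi.single i 1) = gd2 n i j := by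
  rcases eq_or_ne j 0 with h | h
  · simp [gdL, gd2, h]
  · simp only [gdL, gd2, if_neg h, ContinuousLinearMap.neg_apply, pr_apply, Pi.single_apply]
    rcases eq_or_ne i j with h2 | h2
    · simp [h2]
    · simp [h2, if_neg (fun hh : j = i => h2 hh.symm)]

lemma hasFDerivAt_fd (j : Fin n) (x : Fin n → ℝ) (hg : gfun n x ≠ 0) :
    HasFDerivAt (fd n j)
      ((-(1/4) : ℝ) • ((gd n j x * -((gfun n x)^2)⁻¹) • gL n x + (gfun n x)⁻¹ • gdL n j)) x := by
  have hinv : HasFDerivAt (fun y => (gfun n y)⁻¹) (-((gfun n x)^2)⁻¹ • gL n x) x := by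
    exact (hasDerivAt_inv hg).comp_hasFDerivAt x (hasFDerivAt_gfun n x)
  have := (hinv.mul (hasFDerivAt_gd n j x)).const_mul (-(1/4) : ℝ)
  refine this.congr_fderiv ?_
  ext v
  simp [ContinuousLinearMap.smul_apply, smul_eq_mul]
  ring

/-- the explicit Hessian matrix of f -/
def Hmat (x : Fin n → ℝ) : Matrix (Fin n) (Fin n) ℝ :=
  fun i j => (1/4) * (gd n i x * gd n j x) * ((gfun n x)^2)⁻¹ - (1/4) * gd2 n i j * (gfun n x)⁻¹

lemma pd_fd (i j : Fin n) (x : Fin n → ℝ) (hg : gfun n x ≠ 0) :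
    pd n i (fd n j) x = Hmat n x i j := by
  simp only [pd, (hasFDerivAt_fd n j x hg).fderiv, ContinuousLinearMap.smul_apply,
    ContinuousLinearMap.add_apply, gL_apply, gdL_apply, smul_eq_mul, Hmat]
  ring

lemma eventuallyEq_of_U {x : Fin n → ℝ} (hx : 0 < gfun n x) {F G : (Fin n → ℝ) → ℝ}
    (h : ∀ y, 0 < gfun n y → F y = G y) : F =ᶠ[nhds x] G :=
  Filter.eventuallyEq_of_mem ((isOpen_U n).mem_nhds hx) h

lemma Hess_eq {x : Fin n → ℝ} (hx : 0 < gfun n x) :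
    Hess n (ffun n) x = Hmat n x := by
  funext i j
  have heq : pd n j (ffun n) =ᶠ[nhds x] fd n j :=
    eventuallyEq_of_U n hx (fun y hy => pd_ffun n j y (ne_of_gt hy))
  show pd n i (pd n j (ffun n)) x = _
  have : pd n i (pd n j (ffun n)) x = pd n i (fd n j) x := by
    simp only [pd]
    rw [heq.fderiv_eq]
  rw [this, pd_fd n i j x (ne_of_gt hx)]

end AMT

namespace AMT
open Matrix
variable (n : ℕ) [NeZero n]

lemma sum_split (f : Fin n → ℝ) :
    ∑ k, f k = f 0 + ∑ k ∈ Finset.univ \ {0}, f k := by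
  rw [Finset.sum_eq_sum_sdiff_singleton_add (Finset.mem_univ (0 : Fin n)) f, add_comm]

def Lmat (x : Fin n → ℝ) : Matrix (Fin n) (Fin n) ℝ :=
  fun i j => if j = 0 then gd n i x else if i = j then 1 else 0

def Dm (x : Fin n → ℝ) : Matrix (Fin n) (Fin n) ℝ :=
  Matrix.diagonal (fun k => if k = 0 then ((4*(gfun n x)^2)⁻¹ : ℝ) else (4*gfun n x)⁻¹)

lemma Hfact (x : Fin n → ℝ) : Hmat n x = Lmat n x * Dm n x * (Lmat n x)ᵀ := by
  funext i j
  rw [Matrix.mul_apply]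
  simp only [Dm, Matrix.mul_diagonal, Matrix.transpose_apply]
  rw [sum_split]
  have h0 : Lmat n x i 0 * (if (0:Fin n) = 0 then ((4*(gfun n x)^2)⁻¹ : ℝ) else (4*gfun n x)⁻¹)
      * Lmat n x j 0 = gd n i x * (4*(gfun n x)^2)⁻¹ * gd n j x := by
    simp [Lmat]
  have hS : ∑ k ∈ Finset.univ \ {0}, Lmat n x i k *
      (if k = 0 then ((4*(gfun n x)^2)⁻¹ : ℝ) else (4*gfun n x)⁻¹) * Lmat n x j k
      = if i ≠ 0 ∧ j = i then (4*gfun n x)⁻¹ else 0 := by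
    rw [Finset.sum_congr rfl (fun k hk => ?_)]
    · rw [Finset.sum_ite_eq (Finset.univ \ {0}) i (fun k => if j = k then (4*gfun n x)⁻¹ else 0)]
      simp only [Finset.mem_sdiff, Finset.mem_univ, Finset.mem_singleton, true_and]
      by_cases hi : i = (0:Fin n) <;> by_cases hj : j = i <;> simp [hi, hj]
    · simp only [Finset.mem_sdiff, Finset.mem_singleton] at hk
      rw [if_neg hk.2]
      simp only [Lmat, if_neg hk.2]
      by_cases h1 : i = k <;> by_cases h2 : j = k <;>
        simp [h1, h2, eq_comm]
  rw [h0, hS, Hmat]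
  simp only [gd2]
  by_cases hj : j = 0 <;> by_cases hij : i = j
  · subst hij hj; simp [gd]; ring
  · simp only [hj, if_pos, hij]
    rw [if_neg (by rintro ⟨h1, h2⟩; exact hij (h2.symm ▸ hj ▸ rfl))]
    ring
  · subst hij
    have hi0 : i ≠ 0 := hj
    rw [if_neg hj, if_pos rfl, if_pos ⟨hi0, rfl⟩]
    ring
  · rw [if_neg hj, if_neg hij,
      if_neg (by rintro ⟨h1, h2⟩; exact hij h2.symm)]
    ring

lemma card_S : (Finset.univ \ {(0:Fin n)}).card = n - 1 := by
  rw [Finset.card_sdiff_of_subset (by simp)]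
  simp

lemma det_Hmat (x : Fin n → ℝ) (hg : gfun n x ≠ 0) :
    (Hmat n x).det = ((4*gfun n x)^n)⁻¹ * (gfun n x)⁻¹ := by
  rw [Hfact, Matrix.det_mul, Matrix.det_mul, Matrix.det_transpose]
  have hL : (Lmat n x).det = 1 := by
    rw [Matrix.det_of_lowerTriangular (Lmat n x) ?ht]
    · rw [Finset.prod_eq_one]
      intro i _
      simp only [Lmat]
      by_cases hi : i = 0 <;> simp [hi, gd]
    case ht =>
      intro i j hij
      have hlt : i < j := hij
      have hj0 : j ≠ 0 := by
        intro h
        subst h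
        exact absurd hlt (by simp [Fin.not_lt_zero]) 
      simp [Lmat, hj0, ne_of_lt hlt]
  have hD : (Dm n x).det = (4*(gfun n x)^2)⁻¹ * ((4*gfun n x)⁻¹)^(n-1) := by
    rw [Dm, Matrix.det_diagonal]
    rw [Finset.prod_eq_prod_diff_singleton_mul (Finset.mem_univ (0:Fin n))]
    rw [if_pos rfl, Finset.prod_congr rfl (fun k hk => ?_), Finset.prod_const, card_S, mul_comm]
    simp only [Finset.mem_sdiff, Finset.mem_singleton] at hk
    rw [if_neg hk.2]
  rw [hL, hD]
  obtain ⟨m, hm⟩ : ∃ m, n = m + 1 := ⟨n - 1, (Nat.succ_pred_eq_of_pos (Nat.pos_of_ne_zero (NeZero.ne n))).symm⟩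
  subst hm
  simp only [Nat.add_sub_cancel]
  rw [pow_succ]
  field_simp
  rw [one_div, inv_pow, pow_succ, ← mul_assoc,
    inv_mul_cancel₀ (pow_ne_zero _ (mul_ne_zero four_ne_zero hg)), one_mul]

end AMT

namespace AMT
open Matrix
variable (n : ℕ) [NeZero n]

def sig (x : Fin n → ℝ) : ℝ := ∑ k ∈ Finset.univ \ {0}, (x k)^2

def Nmat (x : Fin n → ℝ) : Matrix (Fin n) (Fin n) ℝ :=
  fun i j =>
    if i = 0 then (if j = 0 then 4*gfun n x*(gfun n x + sig n x) else 4*gfun n x*x j)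
    else if j = 0 then 4*gfun n x*x i
    else if i = j then 4*gfun n x else 0

lemma HN (x : Fin n → ℝ) (hg : gfun n x ≠ 0) : Hmat n x * Nmat n x = 1 := by
  funext i j
  show (Hmat n x * Nmat n x) i j = _
  rw [Matrix.mul_apply, sum_split, Matrix.one_apply]
  by_cases hj : j = 0
  · subst hj
    have h1 : ∀ k ∈ Finset.univ \ {(0:Fin n)}, Hmat n x i k * Nmat n x k 0
        = -(gd n i x) * (gfun n x)⁻¹ * (x k)^2 + (if i = k then x i else 0) := by
      intro k hk
      simp only [Finset.mem_sdiff, Finset.mem_singleton] at hk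
      simp only [Hmat, Nmat, gd2, if_neg hk.2, gd, if_pos rfl]
      by_cases hik : i = k
      · subst hik
        simp only [if_pos rfl, if_neg hk.2, if_true]
        field_simp
        ring
      · rw [if_neg hik, if_neg hik]
        by_cases hi : i = 0 <;> simp only [if_pos, hi, if_neg] <;> field_simp <;> ring
    have hS : ∑ k ∈ Finset.univ \ {0}, Hmat n x i k * Nmat n x k 0
        = -(gd n i x) * (gfun n x)⁻¹ * sig n x + (if i ∈ Finset.univ \ {(0:Fin n)} then x i else 0) := by
      rw [Finset.sum_congr rfl h1, Finset.sum_add_distrib, ← Finset.mul_sum, ← sig,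
        Finset.sum_ite_eq (Finset.univ \ {(0:Fin n)}) i (fun _ => x i)]
    rw [hS]
    simp only [Hmat, Nmat, gd2, if_pos rfl, gd, Finset.mem_sdiff, Finset.mem_univ,
      Finset.mem_singleton, true_and]
    by_cases hi : i = 0
    · simp only [hi, if_pos rfl, not_true, if_neg, ite_not]
      simp
      field_simp
      ring
    · simp only [if_neg hi, hi, ite_false, ite_true, not_false_iff, ite_not]
      simp [hi]
      field_simp
      ring
  · have h1 : ∀ k ∈ Finset.univ \ {(0:Fin n)}, Hmat n x i k * Nmat n x k j
        = if k = j then Hmat n x i k * (4*gfun n x) else 0 := by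
      intro k hk
      simp only [Finset.mem_sdiff, Finset.mem_singleton] at hk
      simp only [Nmat, if_neg hk.2, if_neg hj]
      by_cases hkj : k = j
      · rw [if_pos hkj, if_pos hkj]
      · rw [if_neg hkj, if_neg hkj, mul_zero]
    have hS : ∑ k ∈ Finset.univ \ {0}, Hmat n x i k * Nmat n x k j
        = Hmat n x i j * (4*gfun n x) := by
      rw [Finset.sum_congr rfl h1,
        Finset.sum_ite_eq' (Finset.univ \ {(0:Fin n)}) j (fun k => Hmat n x i k * (4*gfun n x))]
      simp [hj]
    rw [hS]
    simp only [Hmat, Nmat, gd2, if_pos rfl, if_neg hj, gd]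
    by_cases hij : i = j
    · subst hij
      simp only [if_pos rfl, if_neg hj, if_true]
      field_simp
      ring
    · rw [if_neg hij, if_neg hij]
      by_cases hi : i = 0 <;> simp only [hi, if_pos, if_neg] <;> field_simp <;> ring

lemma Hmat_inv (x : Fin n → ℝ) (hg : gfun n x ≠ 0) : (Hmat n x)⁻¹ = Nmat n x :=
  Matrix.inv_eq_right_inv (HN n x hg)

end AMT

namespace AMT
open Matrix
variable (n : ℕ) [NeZero n]

lemma Hess_det {x : Fin n → ℝ} (hx : 0 < gfun n x) :
    (Hess n (ffun n) x).det = ((4*gfun n x)^n)⁻¹ * (gfun n x)⁻¹ := by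
  rw [Hess_eq n hx, det_Hmat n x (ne_of_gt hx)]

def mEx (a : ℝ) : ℝ := -((n:ℝ)+1)*a

def CC (a : ℝ) : ℝ := (4:ℝ) ^ (-(n:ℝ)*a)

def wnice (a : ℝ) (y : Fin n → ℝ) : ℝ := CC n a * (gfun n y) ^ (mEx n a)

lemma w_eq (a : ℝ) (y : Fin n → ℝ) (hy : 0 < gfun n y) :
    (Hess n (ffun n) y).det ^ a = wnice n a y := by
  rw [Hess_det n hy, wnice, CC, mEx]
  set g := gfun n y with hgdef
  have h1 : ((4*g)^n)⁻¹ * g⁻¹ = (4:ℝ)^(-(n:ℝ)) * g^(-(n:ℝ)-1) := by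
    rw [← Real.rpow_natCast (4*g) n, ← Real.rpow_neg (by positivity),
      Real.mul_rpow (by norm_num) hy.le, ← Real.rpow_neg_one g,
      mul_assoc, ← Real.rpow_add hy]
    norm_num [sub_eq_add_neg]
  rw [h1, Real.mul_rpow (by positivity) (by positivity),
    ← Real.rpow_mul (by norm_num : (0:ℝ) ≤ 4), ← Real.rpow_mul hy.le]
  congr 1
  ring

def wd (a : ℝ) (j : Fin n) (y : Fin n → ℝ) : ℝ :=
  CC n a * (mEx n a * ((gfun n y) ^ (mEx n a - 1) * gd n j y))

lemma hasFDerivAt_wnice (a : ℝ) (x : Fin n → ℝ) (hx : 0 < gfun n x) :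
    HasFDerivAt (wnice n a)
      (CC n a • (mEx n a * (gfun n x) ^ (mEx n a - 1)) • gL n x) x := by
  have h := ((Real.hasDerivAt_rpow_const (p := mEx n a)
      (Or.inl (ne_of_gt hx))).comp_hasFDerivAt x (hasFDerivAt_gfun n x)).const_mul (CC n a)
  exact h

lemma pd_w (a : ℝ) (j : Fin n) {x : Fin n → ℝ} (hx : 0 < gfun n x) :
    pd n j (fun y => (Hess n (ffun n) y).det ^ a) x = wd n a j x := by
  have heq : (fun y => (Hess n (ffun n) y).det ^ a) =ᶠ[nhds x] wnice n a :=
    eventuallyEq_of_U n hx (fun y hy => w_eq n a y hy)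
  simp only [pd]
  rw [heq.fderiv_eq, (hasFDerivAt_wnice n a x hx).fderiv]
  simp only [ContinuousLinearMap.smul_apply, gL_apply, smul_eq_mul, wd]
  ring

def Wmat (a : ℝ) (x : Fin n → ℝ) (i j : Fin n) : ℝ :=
  CC n a * (mEx n a * (gd n j x * ((mEx n a - 1) * (gfun n x) ^ (mEx n a - 1 - 1) * gd n i x)
    + (gfun n x) ^ (mEx n a - 1) * gd2 n i j))

lemma hasFDerivAt_wd (a : ℝ) (j : Fin n) (x : Fin n → ℝ) (hx : 0 < gfun n x) :
    HasFDerivAt (wd n a j)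
      (CC n a • (mEx n a • ((gfun n x) ^ (mEx n a - 1) • gdL n j
        + gd n j x • ((mEx n a - 1) * (gfun n x) ^ (mEx n a - 1 - 1)) • gL n x))) x := by
  have hr : HasFDerivAt (fun y => (gfun n y) ^ (mEx n a - 1))
      (((mEx n a - 1) * (gfun n x) ^ (mEx n a - 1 - 1)) • gL n x) x :=
    (Real.hasDerivAt_rpow_const (p := mEx n a - 1)
      (Or.inl (ne_of_gt hx))).comp_hasFDerivAt x (hasFDerivAt_gfun n x)
  exact ((hr.mul (hasFDerivAt_gd n j x)).const_mul (mEx n a)).const_mul (CC n a)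

lemma pd_pd_w (a : ℝ) (i j : Fin n) {x : Fin n → ℝ} (hx : 0 < gfun n x) :
    pd n i (pd n j (fun y => (Hess n (ffun n) y).det ^ a)) x = Wmat n a x i j := by
  have heq : pd n j (fun y => (Hess n (ffun n) y).det ^ a) =ᶠ[nhds x] wd n a j :=
    eventuallyEq_of_U n hx (fun y hy => pd_w n a j hy)
  simp only [pd]
  rw [heq.fderiv_eq, (hasFDerivAt_wd n a j x hx).fderiv]
  simp only [ContinuousLinearMap.smul_apply, ContinuousLinearMap.add_apply,
    gL_apply, gdL_apply, smul_eq_mul, Wmat]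
  ring

end AMT

namespace AMT
open Matrix
variable (n : ℕ) [NeZero n]

lemma T1 (x : Fin n → ℝ) :
    ∑ i, ∑ j, Nmat n x i j * (gd n i x * gd n j x) = 4 * (gfun n x)^2 := by
  rw [sum_split]
  have hrest : ∀ i ∈ Finset.univ \ {(0:Fin n)},
      ∑ j, Nmat n x i j * (gd n i x * gd n j x) = 0 := by
    intro i hi
    simp only [Finset.mem_sdiff, Finset.mem_singleton] at hi
    rw [sum_split]
    have h1 : ∀ j ∈ Finset.univ \ {(0:Fin n)}, Nmat n x i j * (gd n i x * gd n j x)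
        = if i = j then 4*gfun n x * (gd n i x * gd n j x) else 0 := by
      intro j hj
      simp only [Finset.mem_sdiff, Finset.mem_singleton] at hj
      simp only [Nmat, if_neg hi.2, if_neg hj.2]
      by_cases hij : i = j
      · rw [if_pos hij, if_pos hij]
      · rw [if_neg hij, if_neg hij, zero_mul]
    rw [Finset.sum_congr rfl h1,
      Finset.sum_ite_eq (Finset.univ \ {(0:Fin n)}) i
        (fun j => 4*gfun n x * (gd n i x * gd n j x))]
    simp only [Finset.mem_sdiff, Finset.mem_univ, Finset.mem_singleton, true_and, hi.2,
      not_false_iff, if_true, if_pos]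
    simp only [Nmat, gd, if_neg hi.2, if_pos rfl, if_true]
    ring
  rw [Finset.sum_congr rfl hrest, Finset.sum_const, smul_zero, add_zero, sum_split]
  have h2 : ∀ j ∈ Finset.univ \ {(0:Fin n)}, Nmat n x 0 j * (gd n 0 x * gd n j x)
      = -(4*gfun n x) * (x j)^2 := by
    intro j hj
    simp only [Finset.mem_sdiff, Finset.mem_singleton] at hj
    simp only [Nmat, gd, if_pos rfl, if_neg hj.2, if_true]
    ring
  rw [Finset.sum_congr rfl h2, ← Finset.mul_sum, ← sig]
  simp only [Nmat, gd, if_pos rfl, if_true]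
  ring

lemma T2 (x : Fin n → ℝ) :
    ∑ i, ∑ j, Nmat n x i j * gd2 n i j = -((n:ℝ) - 1) * (4 * gfun n x) := by
  rw [sum_split]
  have h0 : ∑ j, Nmat n x 0 j * gd2 n 0 j = 0 := by
    apply Finset.sum_eq_zero
    intro j _
    simp only [gd2]
    by_cases hj : j = 0
    · rw [if_pos hj, mul_zero]
    · rw [if_neg hj, if_neg (fun h : (0:Fin n) = j => hj h.symm), mul_zero]
  have hrest : ∀ i ∈ Finset.univ \ {(0:Fin n)},
      ∑ j, Nmat n x i j * gd2 n i j = -(4*gfun n x) := by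
    intro i hi
    simp only [Finset.mem_sdiff, Finset.mem_singleton] at hi
    rw [sum_split]
    have h1 : ∀ j ∈ Finset.univ \ {(0:Fin n)}, Nmat n x i j * gd2 n i j
        = if i = j then -(4*gfun n x) else 0 := by
      intro j hj
      simp only [Finset.mem_sdiff, Finset.mem_singleton] at hj
      simp only [Nmat, gd2, if_neg hi.2, if_neg hj.2]
      by_cases hij : i = j
      · rw [if_pos hij, if_pos hij, if_pos hij]
        ring
      · rw [if_neg hij, if_neg hij, if_neg hij, zero_mul]
    rw [Finset.sum_congr rfl h1,
      Finset.sum_ite_eq (Finset.univ \ {(0:Fin n)}) i (fun _ => -(4*gfun n x))]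
    simp only [Finset.mem_sdiff, Finset.mem_univ, Finset.mem_singleton, true_and, hi.2,
      not_false_iff, if_true, gd2, if_pos rfl, mul_zero, zero_add]
  rw [h0, Finset.sum_congr rfl hrest, Finset.sum_const, card_S, zero_add, nsmul_eq_mul]
  have : ((n - 1 : ℕ) : ℝ) = (n : ℝ) - 1 := by
    have h1 : 1 ≤ n := Nat.one_le_iff_ne_zero.mpr (NeZero.ne n)
    push_cast [Nat.cast_sub h1]
    ring
  rw [this]
  ring

lemma key_eq (a : ℝ) {x : Fin n → ℝ} (hx : 0 < gfun n x) :
    ∑ i, ∑ j, (Hess n (ffun n) x)⁻¹ i j *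
        pd n i (pd n j (fun y => (Hess n (ffun n) y).det ^ a)) x
      = 4 * CC n a * mEx n a * (gfun n x) ^ (mEx n a) * (mEx n a - n) := by
  have hg := ne_of_gt hx
  have hrw : ∀ i j : Fin n, (Hess n (ffun n) x)⁻¹ i j *
      pd n i (pd n j (fun y => (Hess n (ffun n) y).det ^ a)) x
      = (CC n a * mEx n a * (mEx n a - 1) * (gfun n x) ^ (mEx n a - 1 - 1)) *
          (Nmat n x i j * (gd n i x * gd n j x))
        + (CC n a * mEx n a * (gfun n x) ^ (mEx n a - 1)) * (Nmat n x i j * gd2 n i j) := by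
    intro i j
    rw [Hess_eq n hx, Hmat_inv n x hg, pd_pd_w n a i j hx, Wmat]
    ring
  simp only [hrw]
  simp only [Finset.sum_add_distrib, ← Finset.mul_sum]
  rw [T1, T2]
  have e1 : (gfun n x) ^ (mEx n a - 1 - 1) * (gfun n x)^2 = (gfun n x) ^ (mEx n a) := by
    rw [← Real.rpow_natCast (gfun n x) 2, ← Real.rpow_add hx]
    congr 1
    push_cast
    ring
  have e2 : (gfun n x) ^ (mEx n a - 1) * gfun n x = (gfun n x) ^ (mEx n a) := by
    nth_rewrite 2 [← Real.rpow_one (gfun n x)]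
    rw [← Real.rpow_add hx]
    congr 1
    ring
  calc CC n a * mEx n a * (mEx n a - 1) * gfun n x ^ (mEx n a - 1 - 1) * (4 * gfun n x ^ 2)
        + CC n a * mEx n a * gfun n x ^ (mEx n a - 1) * (-((n:ℝ) - 1) * (4 * gfun n x))
      = 4 * (CC n a * mEx n a * (mEx n a - 1)) * (gfun n x ^ (mEx n a - 1 - 1) * gfun n x ^ 2)
        - 4 * ((n:ℝ) - 1) * (CC n a * mEx n a) * (gfun n x ^ (mEx n a - 1) * gfun n x) := by
        ring
    _ = 4 * CC n a * mEx n a * (gfun n x) ^ (mEx n a) * (mEx n a - n) := by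
        rw [e1, e2]; ring

end AMT

namespace AMT
variable (n : ℕ) [NeZero n]

lemma gfun_single : gfun n (Pi.single 0 1 : Fin n → ℝ) = 1 := by
  rw [gfun]
  have h : ∀ k ∈ Finset.univ \ {(0:Fin n)}, ((Pi.single 0 1 : Fin n → ℝ) k)^2/2 = 0 := by
    intro k hk
    simp only [Finset.mem_sdiff, Finset.mem_singleton] at hk
    rw [Pi.single_eq_of_ne hk.2]
    norm_num
  rw [Finset.sum_congr rfl h, Finset.sum_const, smul_zero, Pi.single_eq_same]
  norm_num

end AMT

/-- `f = -(1/4)ln(x₁ - ∑ x_k²/2)` satisfies the affine maximal type equation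
`∑ f^{ij} w_{ij} = 0` with `w = det(Hess f)ᵃ` for `a = -n/(n+1)`; moreover, for `a ≠ 0` the
equation holds on `Ω` only if `a = -n/(n+1)`. -/
theorem affine_maximal_type (n : ℕ) [NeZero n] (hn : 2 ≤ n) :
    (∀ x : Fin n → ℝ, 0 < gfun n x →
      ∑ i, ∑ j, (Hess n (ffun n) x)⁻¹ i j *
          pd n i (pd n j (fun y => (Hess n (ffun n) y).det ^ (-(n : ℝ)/(n + 1)))) x = 0) ∧
    (∀ a : ℝ, a ≠ 0 →
      (∀ x : Fin n → ℝ, 0 < gfun n x →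
        ∑ i, ∑ j, (Hess n (ffun n) x)⁻¹ i j *
            pd n i (pd n j (fun y => (Hess n (ffun n) y).det ^ a)) x = 0) →
      a = -(n : ℝ)/(n + 1)) := by
  have hn1 : ((n:ℝ) + 1) ≠ 0 := by positivity
  constructor
  · intro x hx
    rw [AMT.key_eq n (-(n : ℝ)/(n + 1)) hx]
    have hm : AMT.mEx n (-(n : ℝ)/(n + 1)) = (n : ℝ) := by
      rw [AMT.mEx]
      field_simp
    rw [hm]
    ring
  · intro a ha hall
    have hx0 : 0 < gfun n (Pi.single 0 1 : Fin n → ℝ) := by rw [AMT.gfun_single]; norm_num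
    have h := AMT.key_eq n a hx0
    rw [hall (Pi.single 0 1 : Fin n → ℝ) hx0, AMT.gfun_single, Real.one_rpow] at h
    have hC : AMT.CC n a ≠ 0 := ne_of_gt (Real.rpow_pos_of_pos (by norm_num) _)
    have hm : AMT.mEx n a ≠ 0 := by
      rw [AMT.mEx]
      exact mul_ne_zero (neg_ne_zero.mpr hn1) ha
    have h4 : (4 : ℝ) * AMT.CC n a * AMT.mEx n a ≠ 0 := by
      exact mul_ne_zero (mul_ne_zero (by norm_num) hC) hm
    have hfac : AMT.mEx n a - (n:ℝ) = 0 := by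
      rcases mul_eq_zero.mp h.symm with h' | h'
      · rw [mul_one] at h'
        exact absurd h' h4
      · exact h'
    rw [AMT.mEx] at hfac
    have : a * ((n:ℝ) + 1) = -(n:ℝ) := by linarith [hfac]
    field_simp
    linarith [this]
end
end

section
/- Let $n\geq 2$ and $f(x) = -\tfrac{1}{4}\ln(x_1 - \sum_{k=2}^n x_k^2/2)$ on $\Omega = \{x : x_1 > \sum_{k=2}^n x_k^2/2\}$. With $w = \det(\mathrm{Hess}\, f)^{-1}$, the function $f$ satisfies the Abreu equation $\sum_{i,j} f^{ij} w_{ij} = 4(n+1)$, i.e., the PDE (1.1) with $L^\sharp = -4(n+1)$. -/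
set_option linter.unusedSectionVars false
set_option maxHeartbeats 1000000

noncomputable section

namespace Abreu


variable (n : ℕ) [NeZero n]

/-- the `k`-th coordinate projection as a CLM -/
def prj (k : Fin n) : (Fin n → ℝ) →L[ℝ] ℝ :=
  ContinuousLinearMap.proj (R := ℝ) (φ := fun _ : Fin n => ℝ) k

lemma hasFDerivAt_prj (k : Fin n) (x : Fin n → ℝ) :
    HasFDerivAt (fun y : Fin n → ℝ => y k) (prj n k) x :=
  (prj n k).hasFDerivAt

lemma prj_apply (k : Fin n) (v : Fin n → ℝ) : prj n k v = v k := rfl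

/-- first partials of g -/
def gi (j : Fin n) (x : Fin n → ℝ) : ℝ := if j = 0 then 1 else -(x j)

/-- derivative CLM of g -/
def Lg (x : Fin n → ℝ) : (Fin n → ℝ) →L[ℝ] ℝ :=
  prj n 0 - ∑ k ∈ Finset.univ \ {0}, x k • prj n k

/-- derivative CLM of gi j -/
def Dgi (j : Fin n) : (Fin n → ℝ) →L[ℝ] ℝ :=
  if j = 0 then 0 else -(prj n j)

lemma hasFDerivAt_gfun (x : Fin n → ℝ) : HasFDerivAt (gfun n) (Lg n x) x := by
  have hsum : HasFDerivAt (fun y : Fin n → ℝ => ∑ k ∈ Finset.univ \ {0}, (y k) ^ 2 / 2)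
      (∑ k ∈ Finset.univ \ {0}, x k • prj n k) x := by
    have : ∀ k ∈ Finset.univ \ ({0} : Finset (Fin n)),
        HasFDerivAt (fun y : Fin n → ℝ => (y k) ^ 2 / 2) (x k • prj n k) x := by
      intro k _
      have hfn : (fun y : Fin n → ℝ => (y k) ^ 2 / 2) = fun y => (y k * y k) * (1/2) := by
        funext y; ring
      rw [hfn]
      have := ((hasFDerivAt_prj n k x).mul (hasFDerivAt_prj n k x)).mul_const (1/2 : ℝ)
      refine this.congr_fderiv ?_
      ext v
      simp only [ContinuousLinearMap.smul_apply, prj_apply, smul_eq_mul,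
        ContinuousLinearMap.add_apply]
      ring
    exact HasFDerivAt.fun_sum this
  exact (hasFDerivAt_prj n 0 x).sub hsum

lemma hasFDerivAt_gi (j : Fin n) (x : Fin n → ℝ) : HasFDerivAt (gi n j) (Dgi n j) x := by
  unfold gi Dgi
  by_cases h : j = 0
  · simp only [if_pos h]
    exact hasFDerivAt_const 1 x
  · simp only [if_neg h]
    exact (hasFDerivAt_prj n j x).neg

lemma single_apply (i k : Fin n) : Pi.single (M := fun _ => ℝ) i 1 k = if k = i then 1 else 0 :=
  Pi.single_apply i 1 k

lemma Lg_apply (x : Fin n → ℝ) (j : Fin n) : Lg n x (Pi.single j 1) = gi n j x := by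
  unfold Lg gi
  simp only [ContinuousLinearMap.sub_apply, ContinuousLinearMap.sum_apply,
    ContinuousLinearMap.smul_apply, prj_apply, single_apply, smul_eq_mul]
  by_cases h : j = 0
  · subst h
    rw [if_pos rfl, if_pos rfl, Finset.sum_eq_zero]
    · ring
    · intro k hk
      simp only [Finset.mem_sdiff, Finset.mem_singleton] at hk
      rw [if_neg hk.2]; ring
  · rw [if_neg (Ne.symm (by simpa using h) : (0:Fin n) ≠ j), if_neg h,
      Finset.sum_eq_single j]
    · rw [if_pos rfl]; ring
    · intro k _ hkj
      rw [if_neg hkj]; ring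
    · intro hj
      simp only [Finset.mem_sdiff, Finset.mem_singleton, Finset.mem_univ, true_and] at hj
      exact absurd h (by tauto)

/-- `Em i j = 1` iff `i = j ≠ 0` (this is `-∂ᵢ∂ⱼ g`). -/
def Em (i j : Fin n) : ℝ := if i = j ∧ i ≠ 0 then 1 else 0

lemma Dgi_apply (i j : Fin n) : Dgi n j (Pi.single i 1) = -(Em n i j) := by
  unfold Dgi Em
  by_cases h : j = 0
  · rw [if_pos h, if_neg (by rintro ⟨h1, h2⟩; exact h2 (h1.trans h))]
    simp
  · rw [if_neg h]
    simp only [ContinuousLinearMap.neg_apply, prj_apply, single_apply]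
    by_cases hij : i = j
    · subst hij
      rw [if_pos rfl, if_pos ⟨rfl, fun hi0 => h hi0⟩]
    · rw [if_neg (fun hji : j = i => hij hji.symm), if_neg (by tauto)]

lemma pd_gfun (j : Fin n) (x : Fin n → ℝ) : pd n j (gfun n) x = gi n j x := by
  rw [pd, (hasFDerivAt_gfun n x).fderiv, Lg_apply]



lemma continuous_gfun : Continuous (gfun n) :=
  continuous_iff_continuousAt.2 fun x => (hasFDerivAt_gfun n x).continuousAt

lemma isOpen_U : IsOpen {y : Fin n → ℝ | 0 < gfun n y} :=
  isOpen_lt continuous_const (continuous_gfun n)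

/-- the first partials of f -/
def Ff (j : Fin n) (x : Fin n → ℝ) : ℝ := -(1/4) * ((gfun n x)⁻¹ * gi n j x)

lemma pd_ffun (j : Fin n) (x : Fin n → ℝ) (hx : gfun n x ≠ 0) :
    pd n j (ffun n) x = Ff n j x := by
  have h : HasFDerivAt (ffun n) ((-(1/4) : ℝ) • ((gfun n x)⁻¹ • Lg n x)) x :=
    ((hasFDerivAt_gfun n x).log hx).const_mul (-(1/4))
  rw [pd, h.fderiv]
  simp [Ff, Lg_apply, mul_assoc]

lemma hasFDerivAt_Ff (j : Fin n) (x : Fin n → ℝ) (hx : gfun n x ≠ 0) :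
    HasFDerivAt (Ff n j)
      ((-(1/4) : ℝ) • ((gfun n x)⁻¹ • Dgi n j +
        gi n j x • ((-((gfun n x) ^ 2)⁻¹) • Lg n x))) x := by
  have hinv : HasFDerivAt (fun y => (gfun n y)⁻¹)
      ((-((gfun n x) ^ 2)⁻¹) • Lg n x) x :=
    (hasDerivAt_inv hx).comp_hasFDerivAt x (hasFDerivAt_gfun n x)
  exact (hinv.mul (hasFDerivAt_gi n j x)).const_mul (-(1/4))

/-- explicit Hessian entries of f -/
def Hmat (x : Fin n → ℝ) : Matrix (Fin n) (Fin n) ℝ :=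
  Matrix.of fun i j => (gi n i x * gi n j x + gfun n x * Em n i j) / (4 * (gfun n x) ^ 2)

lemma hess_ffun (x : Fin n → ℝ) (hx : 0 < gfun n x) :
    Hess n (ffun n) x = Hmat n x := by
  funext i j
  have hev : pd n j (ffun n) =ᶠ[nhds x] Ff n j := by
    filter_upwards [(isOpen_U n).mem_nhds hx] with y hy
    exact pd_ffun n j y (ne_of_gt hy)
  have h1 : fderiv ℝ (pd n j (ffun n)) x = fderiv ℝ (Ff n j) x :=
    Filter.EventuallyEq.fderiv_eq hev
  show pd n i (pd n j (ffun n)) x = _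
  rw [pd, h1, (hasFDerivAt_Ff n j x (ne_of_gt hx)).fderiv]
  simp only [ContinuousLinearMap.smul_apply, ContinuousLinearMap.add_apply,
    Dgi_apply, Lg_apply, smul_eq_mul, Hmat, Matrix.of_apply]
  have hg := ne_of_gt hx
  field_simp
  ring

def Mmat (x : Fin n → ℝ) : Matrix (Fin n) (Fin n) ℝ :=
  Matrix.of fun i j => gi n i x * gi n j x + gfun n x * Em n i j

def Lmat (x : Fin n → ℝ) : Matrix (Fin n) (Fin n) ℝ :=
  Matrix.of fun i j => if j = 0 then gi n i x else if i = j then 1 else 0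

def Nmat (x : Fin n → ℝ) : Matrix (Fin n) (Fin n) ℝ :=
  Matrix.of fun i j => if i = 0 then gi n j x else gfun n x * Em n i j

lemma Em_zero_left (j : Fin n) : Em n 0 j = 0 := by
  unfold Em; rw [if_neg]; rintro ⟨_, h⟩; exact h rfl

lemma Em_zero_right (i : Fin n) : Em n i 0 = 0 := by
  unfold Em; rw [if_neg]; rintro ⟨h1, h2⟩; exact h2 h1

lemma gi_zero (x : Fin n → ℝ) : gi n 0 x = 1 := if_pos rfl

lemma Mmat_eq_mul (x : Fin n → ℝ) : Mmat n x = Lmat n x * Nmat n x := by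
  funext i j
  show gi n i x * gi n j x + gfun n x * Em n i j = ∑ k, Lmat n x i k * Nmat n x k j
  rw [← Finset.add_sum_erase Finset.univ _ (Finset.mem_univ 0)]
  have h0 : Lmat n x i 0 * Nmat n x 0 j = gi n i x * gi n j x := by
    simp [Lmat, Nmat]
  rw [h0]
  congr 1
  have : ∀ k ∈ Finset.univ.erase (0 : Fin n),
      Lmat n x i k * Nmat n x k j = if i = k then gfun n x * Em n k j else 0 := by
    intro k hk
    have hk0 : k ≠ 0 := Finset.ne_of_mem_erase hk
    simp only [Lmat, Nmat, Matrix.of_apply, if_neg hk0]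
    by_cases h : i = k
    · rw [if_pos h, if_pos h, one_mul]
    · rw [if_neg h, if_neg h, zero_mul]
  rw [Finset.sum_congr rfl this, Finset.sum_ite_eq]
  by_cases h : i = 0
  · subst h
    simp [Em_zero_left]
  · rw [if_pos (Finset.mem_erase.2 ⟨h, Finset.mem_univ i⟩)]

lemma det_Lmat (x : Fin n → ℝ) : (Lmat n x).det = 1 := by
  rcases Nat.exists_eq_succ_of_ne_zero (NeZero.ne n) with ⟨m, rfl⟩
  rw [Matrix.det_succ_row_zero]
  rw [Finset.sum_eq_single 0]
  · have h00 : Lmat (m+1) x 0 0 = 1 := by simp [Lmat, gi_zero]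
    rw [h00]
    have : (Lmat (m+1) x).submatrix Fin.succ (Fin.succAbove 0) = 1 := by
      funext i j
      simp only [Matrix.submatrix_apply, Fin.zero_succAbove, Lmat, Matrix.of_apply]
      rw [if_neg (Fin.succ_ne_zero j)]
      by_cases h : i = j
      · subst h; simp [Matrix.one_apply]
      · rw [if_neg (by simpa using h), Matrix.one_apply_ne (by simpa using h)]
    rw [this, Matrix.det_one]
    norm_num
  · intro j _ hj
    have : Lmat (m+1) x 0 j = 0 := by
      simp only [Lmat, Matrix.of_apply]
      rw [if_neg hj, if_neg (fun h : (0 : Fin (m+1)) = j => hj h.symm)]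
    rw [this]
    ring
  · simp

lemma det_Nmat (x : Fin n → ℝ) : (Nmat n x).det = (gfun n x) ^ (n - 1) := by
  rcases Nat.exists_eq_succ_of_ne_zero (NeZero.ne n) with ⟨m, rfl⟩
  rw [Matrix.det_succ_column_zero]
  rw [Finset.sum_eq_single 0]
  · have h00 : Nmat (m+1) x 0 0 = 1 := by simp [Nmat, gi_zero]
    rw [h00]
    have : (Nmat (m+1) x).submatrix (Fin.succAbove 0) Fin.succ =
        Matrix.diagonal (fun _ : Fin m => gfun (m+1) x) := by
      funext i j
      simp only [Matrix.submatrix_apply, Fin.zero_succAbove, Nmat, Matrix.of_apply]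
      rw [if_neg (Fin.succ_ne_zero i)]
      by_cases h : i = j
      · subst h
        simp [Em, Matrix.diagonal, Fin.succ_ne_zero]
      · rw [Matrix.diagonal_apply_ne _ h]
        have : Em (m+1) i.succ j.succ = 0 := by
          unfold Em
          rw [if_neg]
          rintro ⟨h1, _⟩
          exact h (by simpa using h1)
        rw [this, mul_zero]
    rw [this, Matrix.det_diagonal]
    simp
  · intro i _ hi
    have : Nmat (m+1) x i 0 = 0 := by
      simp only [Nmat, Matrix.of_apply]
      rw [if_neg hi, Em_zero_right, mul_zero]
    rw [this]
    ring
  · simp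

lemma det_Mmat (x : Fin n → ℝ) : (Mmat n x).det = (gfun n x) ^ (n - 1) := by
  rw [Mmat_eq_mul, Matrix.det_mul, det_Lmat, det_Nmat, one_mul]

lemma Hmat_eq_smul (x : Fin n → ℝ) :
    Hmat n x = (4 * (gfun n x) ^ 2)⁻¹ • Mmat n x := by
  funext i j
  simp only [Hmat, Mmat, Matrix.smul_apply, Matrix.of_apply, smul_eq_mul]
  rw [div_eq_inv_mul]

lemma det_Hmat (x : Fin n → ℝ) :
    (Hmat n x).det = ((4 * (gfun n x) ^ 2)⁻¹) ^ n * (gfun n x) ^ (n - 1) := by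
  rw [Hmat_eq_smul, Matrix.det_smul, det_Mmat, Fintype.card_fin]

lemma det_Hmat_inv (x : Fin n → ℝ) (hx : 0 < gfun n x) :
    ((Hmat n x).det)⁻¹ = 4 ^ n * (gfun n x) ^ (n + 1) := by
  have hg : gfun n x ≠ 0 := ne_of_gt hx
  have h1 : 1 ≤ n := Nat.one_le_iff_ne_zero.2 (NeZero.ne n)
  rw [det_Hmat]
  rw [mul_inv, ← inv_pow, inv_inv]
  have h2 : (4 * (gfun n x) ^ 2) ^ n = 4 ^ n * (gfun n x) ^ (n + 1) * (gfun n x) ^ (n - 1) := by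
    rw [mul_pow, ← pow_mul, mul_assoc, ← pow_add]
    congr 2
    omega
  rw [h2]
  field_simp



def phi (x : Fin n → ℝ) : ℝ := 4 ^ n * (gfun n x) ^ (n + 1)

def Pphi (j : Fin n) (x : Fin n → ℝ) : ℝ :=
  (4 ^ n * (n + 1) : ℝ) * ((gfun n x) ^ n * gi n j x)

def Psi (i j : Fin n) (x : Fin n → ℝ) : ℝ :=
  (4 ^ n * (n + 1) : ℝ) *
    ((gfun n x) ^ n * (-(Em n i j)) + gi n j x * ((n : ℝ) * (gfun n x) ^ (n - 1) * gi n i x))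

lemma hasFDerivAt_phi (x : Fin n → ℝ) :
    HasFDerivAt (phi n)
      ((4 ^ n : ℝ) • ((((n : ℝ) + 1) * (gfun n x) ^ n) • Lg n x)) x := by
  have h1 : HasFDerivAt (fun y => (gfun n y) ^ (n + 1))
      ((((n : ℝ) + 1) * (gfun n x) ^ n) • Lg n x) x := by
    have := (hasDerivAt_pow (n + 1) (gfun n x)).comp_hasFDerivAt x (hasFDerivAt_gfun n x)
    simpa [Function.comp_def] using this
  exact h1.const_mul (4 ^ n)

lemma pd_phi (j : Fin n) : pd n j (phi n) = Pphi n j := by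
  funext x
  rw [pd, (hasFDerivAt_phi n x).fderiv]
  simp only [ContinuousLinearMap.smul_apply, Lg_apply, smul_eq_mul, Pphi]
  ring

lemma hasFDerivAt_Pphi (j : Fin n) (x : Fin n → ℝ) :
    HasFDerivAt (Pphi n j)
      ((4 ^ n * ((n : ℝ) + 1)) • ((gfun n x) ^ n • Dgi n j +
        gi n j x • (((n : ℝ) * (gfun n x) ^ (n - 1)) • Lg n x))) x := by
  have hpow : HasFDerivAt (fun y => (gfun n y) ^ n)
      (((n : ℝ) * (gfun n x) ^ (n - 1)) • Lg n x) x :=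
    (hasDerivAt_pow n (gfun n x)).comp_hasFDerivAt x (hasFDerivAt_gfun n x)
  exact (hpow.mul (hasFDerivAt_gi n j x)).const_mul ((4 : ℝ) ^ n * ((n : ℝ) + 1))

lemma pd_pd_phi (i j : Fin n) (x : Fin n → ℝ) :
    pd n i (pd n j (phi n)) x = Psi n i j x := by
  rw [pd_phi, pd, (hasFDerivAt_Pphi n j x).fderiv]
  simp only [ContinuousLinearMap.smul_apply, ContinuousLinearMap.add_apply,
    Dgi_apply, Lg_apply, smul_eq_mul, Psi]

/-- squared norm of the nonzero coordinates -/
def Sq (x : Fin n → ℝ) : ℝ := ∑ k ∈ Finset.univ.erase 0, (x k) ^ 2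

def Cmat (x : Fin n → ℝ) : Matrix (Fin n) (Fin n) ℝ :=
  Matrix.of fun i j =>
    if i = 0 then (if j = 0 then gfun n x + Sq n x else x j)
    else if j = 0 then x i else if i = j then 1 else 0

def Bmat (x : Fin n → ℝ) : Matrix (Fin n) (Fin n) ℝ :=
  Matrix.of fun i j => 4 * gfun n x * Cmat n x i j

lemma Cmat_symm (x : Fin n → ℝ) (i j : Fin n) : Cmat n x i j = Cmat n x j i := by
  simp only [Cmat, Matrix.of_apply]
  by_cases hi : i = 0 <;> by_cases hj : j = 0
  · simp [hi, hj]
  · simp [hi, hj]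
  · simp [hi, hj]
  · simp only [if_neg hi, if_neg hj]
    by_cases h : i = j
    · rw [if_pos h, if_pos h.symm]
    · rw [if_neg h, if_neg (fun hh : j = i => h hh.symm)]

lemma sumA (x : Fin n → ℝ) (j : Fin n) :
    ∑ k, gi n k x * Cmat n x k j = if j = 0 then gfun n x else 0 := by
  rw [← Finset.add_sum_erase Finset.univ _ (Finset.mem_univ 0)]
  have h0 : gi n 0 x * Cmat n x 0 j =
      if j = 0 then gfun n x + Sq n x else x j := by
    rw [gi_zero, one_mul]
    simp [Cmat]
  rw [h0]
  by_cases hj : j = 0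
  · subst hj
    rw [if_pos rfl, if_pos rfl]
    have : ∀ k ∈ Finset.univ.erase (0 : Fin n),
        gi n k x * Cmat n x k 0 = -((x k) ^ 2) := by
      intro k hk
      have hk0 : k ≠ 0 := Finset.ne_of_mem_erase hk
      simp only [gi, Cmat, Matrix.of_apply, if_neg hk0]
      simp
      ring
    rw [Finset.sum_congr rfl this, Finset.sum_neg_distrib]
    show gfun n x + Sq n x + -(Sq n x) = gfun n x
    ring
  · rw [if_neg hj, if_neg hj]
    have : ∀ k ∈ Finset.univ.erase (0 : Fin n),
        gi n k x * Cmat n x k j = if k = j then -(x j) else 0 := by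
      intro k hk
      have hk0 : k ≠ 0 := Finset.ne_of_mem_erase hk
      simp only [gi, Cmat, Matrix.of_apply, if_neg hk0, if_neg hj]
      by_cases h : k = j
      · rw [if_pos h, if_pos h, h, mul_one]
      · rw [if_neg h, if_neg h, mul_zero]
    rw [Finset.sum_congr rfl this, Finset.sum_ite_eq' (Finset.univ.erase 0) j]
    rw [if_pos (Finset.mem_erase.2 ⟨hj, Finset.mem_univ j⟩)]
    ring

lemma sumB (x : Fin n → ℝ) (i j : Fin n) :
    ∑ k, Em n i k * Cmat n x k j = if i = 0 then 0 else Cmat n x i j := by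
  have : ∀ k ∈ Finset.univ, Em n i k * Cmat n x k j =
      if i = k then (if i = 0 then 0 else Cmat n x k j) else 0 := by
    intro k _
    unfold Em
    by_cases h : i = k
    · subst h
      by_cases hi : i = 0
      · rw [if_neg (by tauto), if_pos rfl, if_pos hi, zero_mul]
      · rw [if_pos ⟨rfl, hi⟩, if_pos rfl, if_neg hi, one_mul]
    · rw [if_neg (by tauto), if_neg h, zero_mul]
  rw [Finset.sum_congr rfl this, Finset.sum_ite_eq]
  rw [if_pos (Finset.mem_univ i)]

lemma HB (x : Fin n → ℝ) (hx : 0 < gfun n x) : Hmat n x * Bmat n x = 1 := by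
  have hg : gfun n x ≠ 0 := ne_of_gt hx
  funext i j
  show ∑ k, Hmat n x i k * Bmat n x k j = (1 : Matrix (Fin n) (Fin n) ℝ) i j
  have key : ∀ k, Hmat n x i k * Bmat n x k j =
      (gi n i x * (gi n k x * Cmat n x k j) + Em n i k * Cmat n x k j * gfun n x) / gfun n x := by
    intro k
    show (gi n i x * gi n k x + gfun n x * Em n i k) / (4 * (gfun n x) ^ 2) *
        (4 * gfun n x * Cmat n x k j) = _
    field_simp
  simp only [key]
  rw [← Finset.sum_div, Finset.sum_add_distrib, ← Finset.mul_sum, ← Finset.sum_mul,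
    sumA, sumB, Matrix.one_apply]
  by_cases hi : i = 0 <;> by_cases hj : j = 0
  · subst hi; subst hj
    rw [if_pos rfl, if_pos rfl, if_pos rfl, gi_zero]
    field_simp
    simp
  · subst hi
    rw [if_neg hj, if_pos rfl, if_neg (fun h : (0 : Fin n) = j => hj h.symm)]
    simp
  · subst hj
    rw [if_pos rfl, if_neg hi, if_neg hi]
    have hC : Cmat n x i 0 = x i := by simp [Cmat, if_neg hi]
    rw [hC]
    unfold gi
    rw [if_neg hi]
    field_simp
    ring
  · rw [if_neg hj, if_neg hi]
    have hC : Cmat n x i j = if i = j then 1 else 0 := by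
      simp [Cmat, if_neg hi, if_neg hj]
    rw [hC]
    by_cases h : i = j <;> simp [h, hg]



lemma sum1 (x : Fin n → ℝ) :
    ∑ i, ∑ j, Bmat n x i j * Em n i j = 4 * gfun n x * ((n : ℝ) - 1) := by
  have inner : ∀ i : Fin n, ∑ j, Bmat n x i j * Em n i j =
      4 * gfun n x * (if i = 0 then 0 else 1) := by
    intro i
    have : ∀ j ∈ Finset.univ, Bmat n x i j * Em n i j =
        if i = j then (if i = 0 then 0 else 4 * gfun n x * Cmat n x i i) else 0 := by
      intro j _
      unfold Em Bmat
      by_cases h : i = j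
      · subst h
        by_cases hi : i = 0
        · rw [if_neg (by tauto), if_pos rfl, if_pos hi, mul_zero]
        · rw [if_pos ⟨rfl, hi⟩, if_pos rfl, if_neg hi, mul_one]
          rfl
      · rw [if_neg (by tauto), if_neg h, mul_zero]
    rw [Finset.sum_congr rfl this, Finset.sum_ite_eq, if_pos (Finset.mem_univ i)]
    by_cases hi : i = 0
    · rw [if_pos hi, if_pos hi, mul_zero]
    · rw [if_neg hi, if_neg hi, mul_one]
      have : Cmat n x i i = 1 := by
        simp [Cmat, if_neg hi]
      rw [this, mul_one]
  rw [Finset.sum_congr rfl (fun i _ => inner i)]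
  rw [← Finset.mul_sum]
  congr 1
  have hsplit : ∀ i : Fin n, (if i = 0 then (0:ℝ) else 1) = 1 - (if i = 0 then 1 else 0) := by
    intro i; by_cases h : i = 0 <;> simp [h]
  simp only [hsplit]
  rw [Finset.sum_sub_distrib, Finset.sum_const, Finset.card_univ, Fintype.card_fin]
  rw [Finset.sum_ite_eq' Finset.univ (0 : Fin n) (fun _ => (1:ℝ)), if_pos (Finset.mem_univ _)]
  simp

lemma sum2 (x : Fin n → ℝ) :
    ∑ i, ∑ j, Bmat n x i j * (gi n i x * gi n j x) = 4 * (gfun n x) ^ 2 := by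
  have inner : ∀ i : Fin n, ∑ j, Bmat n x i j * (gi n i x * gi n j x) =
      4 * gfun n x * gi n i x * (if i = 0 then gfun n x else 0) := by
    intro i
    have : ∀ j ∈ Finset.univ, Bmat n x i j * (gi n i x * gi n j x) =
        (4 * gfun n x * gi n i x) * (gi n j x * Cmat n x j i) := by
      intro j _
      rw [show Bmat n x i j = 4 * gfun n x * Cmat n x i j from rfl, Cmat_symm]
      ring
    rw [Finset.sum_congr rfl this, ← Finset.mul_sum, sumA]
  rw [Finset.sum_congr rfl (fun i _ => inner i)]
  rw [Finset.sum_eq_single 0]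
  · rw [if_pos rfl, gi_zero]
    ring
  · intro i _ hi
    rw [if_neg hi, mul_zero]
  · simp


end Abreu

/-- with `w = det(Hess f)⁻¹`, the function `f` satisfies the Abreu equation
`∑ f^{ij} ∂ᵢ∂ⱼ(D⁻¹) = 4(n+1) D⁻¹` on `Ω` (i.e. PDE (1.1) with `L♯ = -4(n+1)`). -/

theorem abreu_equation (n : ℕ) [NeZero n] (hn : 2 ≤ n)
    (x : Fin n → ℝ) (hx : 0 < gfun n x) :
    ∑ i, ∑ j, (Hess n (ffun n) x)⁻¹ i j *
        pd n i (pd n j (fun y => ((Hess n (ffun n) y).det)⁻¹)) x =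
      4 * (n + 1) * ((Hess n (ffun n) x).det)⁻¹ := by
  open Abreu in
  have hg : gfun n x ≠ 0 := ne_of_gt hx
  have hU : {y : Fin n → ℝ | 0 < gfun n y} ∈ nhds x := (isOpen_U n).mem_nhds hx
  -- the inverse Hessian is Bmat
  have hInv : (Hess n (ffun n) x)⁻¹ = Bmat n x := by
    rw [hess_ffun n x hx]
    exact Matrix.inv_eq_right_inv (HB n x hx)
  -- det inverse function equals phi on U
  have hdet : ∀ y, 0 < gfun n y → ((Hess n (ffun n) y).det)⁻¹ = phi n y := by
    intro y hy
    rw [hess_ffun n y hy, det_Hmat_inv n y hy]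
    rfl
  -- second partials
  have hpdij : ∀ i j, pd n i (pd n j (fun y => ((Hess n (ffun n) y).det)⁻¹)) x
      = Psi n i j x := by
    intro i j
    have hev1 : (fun y => ((Hess n (ffun n) y).det)⁻¹) =ᶠ[nhds x] phi n := by
      filter_upwards [hU] with y hy using hdet y hy
    have hpdj : ∀ y, 0 < gfun n y →
        pd n j (fun y => ((Hess n (ffun n) y).det)⁻¹) y = pd n j (phi n) y := by
      intro y hy
      have : (fun y => ((Hess n (ffun n) y).det)⁻¹) =ᶠ[nhds y] phi n := by
        filter_upwards [(isOpen_U n).mem_nhds hy] with z hz using hdet z hz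
      exact congrFun (congrArg _ this.fderiv_eq) _
    have hev2 : pd n j (fun y => ((Hess n (ffun n) y).det)⁻¹) =ᶠ[nhds x] pd n j (phi n) := by
      filter_upwards [hU] with y hy using hpdj y hy
    calc pd n i (pd n j (fun y => ((Hess n (ffun n) y).det)⁻¹)) x
        = pd n i (pd n j (phi n)) x := congrFun (congrArg _ hev2.fderiv_eq) _
      _ = Psi n i j x := pd_pd_phi n i j x
  simp only [hInv, hpdij, hdet x hx]
  -- now a pure algebraic computation
  have expand : ∀ i j, Bmat n x i j * Psi n i j x =
      (-(4 ^ n * ((n : ℝ) + 1) * (gfun n x) ^ n)) * (Bmat n x i j * Em n i j) +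
      (4 ^ n * ((n : ℝ) + 1) * (n : ℝ) * (gfun n x) ^ (n - 1)) *
        (Bmat n x i j * (gi n i x * gi n j x)) := by
    intro i j
    unfold Psi
    push_cast
    ring
  simp only [expand, Finset.sum_add_distrib, ← Finset.mul_sum]
  rw [sum1, sum2]
  have h1 : (gfun n x) ^ n = (gfun n x) ^ (n - 1) * gfun n x := by
    rw [← pow_succ]
    congr 1
    omega
  have h2 : (gfun n x) ^ (n + 1) = (gfun n x) ^ (n - 1) * (gfun n x) ^ 2 := by
    rw [← pow_add]
    congr 1
    omega
  rw [h1]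
  show _ = 4 * ((n : ℝ) + 1) * ((4:ℝ) ^ n * (gfun n x) ^ (n+1))
  rw [h2]
  push_cast
  ring
end
end
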